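/- arXiv:1709.04788 — 5 statements merged into one kernel-verified Lean document; each statement's English description precedes it below -/
import Mathlib

section
/- One-dimensional discrete Noether theorem: if a local Lagrangian L on the path with N edges is invariant under the infinitesimal transformation Δ, i.e. (d/dt) L[φ + tΔ](k) |_{t=0} = 0 for every vertex k, and φ is stationary for Σ_{k=0}^N L[φ](k), then the current j(k) := ∂L[φ]/∂(δφ)(k) · Δ(k−1) is constant in k for 1 ≤ k ≤ N. -/
/-!
Invariance of the `k`-th term of the Lagrangian under `Δ` says
`p1ₖ Δₖ + p2ₖ (Δₖ - Δₖ₋₁) = 0`. Varying `φ k` alone changes only the terms `k` and `k + 1` of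
the action, so at an interior vertex stationarity is the Euler–Lagrange equation
`p1ₖ + p2ₖ = p2ₖ₊₁`. Multiplying it by `Δₖ` and subtracting the invariance identity gives
`p2ₖ Δₖ₋₁ = p2ₖ₊₁ Δₖ`, i.e. the current does not change from `k` to `k + 1`.
-/

open ContinuousLinearMap Function

theorem Nat.eq_of_forall_eq_succ_of_le {α : Type*} {f : ℕ → α} {a N : ℕ}
    (h : ∀ n, a ≤ n → n < N → f n = f (n + 1)) {k : ℕ} (hak : a ≤ k) (hkN : k ≤ N) :
    f k = f a := by
  induction k, hak using Nat.le_induction with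
  | base => rfl
  | succ n han ih => rw [← h n han (by omega), ih (by omega)]

section DiscreteCalculus

variable {𝕜 : Type*} [NontriviallyNormedField 𝕜]

theorem HasFDerivAt.comp_hasDerivAt_of_partials {F : 𝕜 → 𝕜 → 𝕜} {Fx Fy x y : 𝕜}
    {u v : 𝕜 → 𝕜} {u' v' t : 𝕜}
    (hF : HasFDerivAt (fun z : 𝕜 × 𝕜 => F z.1 z.2) (Fx • fst 𝕜 𝕜 𝕜 + Fy • snd 𝕜 𝕜 𝕜) (x, y))
    (hu : HasDerivAt u u' t) (hv : HasDerivAt v v' t) (hut : u t = x) (hvt : v t = y) :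
    HasDerivAt (fun s => F (u s) (v s)) (Fx * u' + Fy * v') t := by
  subst hut hvt
  simpa [comp_def] using hF.comp_hasDerivAt t (hu.prodMk hv)

theorem hasDerivAt_update_apply {ι : Type*} [DecidableEq ι] (φ : ι → 𝕜) (j i : ι) (x : 𝕜) :
    HasDerivAt (fun y => update φ j y i) (if i = j then 1 else 0) x := by
  by_cases hij : i = j
  · subst hij
    simpa using hasDerivAt_id' x
  · simpa [update_of_ne hij, hij] using hasDerivAt_const x (φ i)

theorem mul_add_mul_sub_eq_zero_of_hasDerivAt_shift {F : 𝕜 → 𝕜 → 𝕜} {Fx Fy x y a b : 𝕜}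
    (hF : HasFDerivAt (fun z : 𝕜 × 𝕜 => F z.1 z.2) (Fx • fst 𝕜 𝕜 𝕜 + Fy • snd 𝕜 𝕜 𝕜)
      (x, x - y))
    (hinv : HasDerivAt (fun t => F (x + t * a) ((x + t * a) - (y + t * b))) 0 0) :
    Fx * a + Fy * (a - b) = 0 := by
  have hu : HasDerivAt (fun t => x + t * a) a 0 := by
    simpa using ((hasDerivAt_id' 0).mul_const a).const_add x
  have hw : HasDerivAt (fun t => y + t * b) b 0 := by
    simpa using ((hasDerivAt_id' 0).mul_const b).const_add y
  exact hinv.unique (hF.comp_hasDerivAt_of_partials hu (hu.sub hw) (by simp) (by simp)) |>.symm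

/-- At `k = 0` the truncated subtraction `0 - 1 = 0` makes the difference term vanish. -/
def discreteAction (L : ℕ → 𝕜 → 𝕜 → 𝕜) (N : ℕ) (u : ℕ → 𝕜) : 𝕜 :=
  ∑ k ∈ Finset.range (N + 1), L k (u k) (u k - u (k - 1))

theorem hasDerivAt_discreteAction_update {L p1 p2 : ℕ → 𝕜 → 𝕜 → 𝕜}
    (hd : ∀ k a b, HasFDerivAt (fun z : 𝕜 × 𝕜 => L k z.1 z.2)
      (p1 k a b • fst 𝕜 𝕜 𝕜 + p2 k a b • snd 𝕜 𝕜 𝕜) (a, b))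
    {N j : ℕ} (hj : 1 ≤ j) (hjN : j < N) (φ : ℕ → 𝕜) :
    HasDerivAt (fun x => discreteAction L N (update φ j x))
      (p1 j (φ j) (φ j - φ (j - 1)) + p2 j (φ j) (φ j - φ (j - 1))
        - p2 (j + 1) (φ (j + 1)) (φ (j + 1) - φ j)) (φ j) := by
  have hterm : ∀ k, HasDerivAt
      (fun x => L k (update φ j x k) (update φ j x k - update φ j x (k - 1)))
      (p1 k (φ k) (φ k - φ (k - 1)) * (if k = j then 1 else 0)
        + p2 k (φ k) (φ k - φ (k - 1)) * ((if k = j then 1 else 0) - if k - 1 = j then 1 else 0))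
      (φ j) :=
    fun k => (hd k _ _).comp_hasDerivAt_of_partials (hasDerivAt_update_apply φ j k _)
      ((hasDerivAt_update_apply φ j k _).fun_sub (hasDerivAt_update_apply φ j (k - 1) _))
      (by simp) (by simp)
  have hshift : ∀ k, (if k - 1 = j then (1 : 𝕜) else 0) = if k = j + 1 then 1 else 0 :=
    fun k => if_congr (by omega) rfl rfl
  refine (HasDerivAt.fun_sum (u := Finset.range (N + 1)) fun k _ => hterm k).congr_deriv ?_
  simp only [hshift, mul_sub, mul_ite, mul_one, mul_zero, Finset.sum_add_distrib,
    Finset.sum_sub_distrib, Finset.sum_ite_eq', Finset.mem_range]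
  simp only [Nat.add_sub_cancel, show j < N + 1 by omega, show j + 1 < N + 1 by omega, if_true]
  ring

end DiscreteCalculus

/-- **One-dimensional discrete Noether theorem.**
`L` is a local Lagrangian on the path `0,…,N`: `L[φ](k) = L k (φ k) (φ k − φ (k−1))`
with differentiable `L k` (partial derivatives `p1`, `p2` in the first and second
argument).  If `L` is invariant under the infinitesimal transformation `Δ`, i.e.
`(d/dt) L[φ + tΔ](k) |_{t=0} = 0` for every vertex `k`, and `φ` is stationary
for `∑_{k=0}^N L[φ](k)`, then the current
`j(k) = ∂L[φ]/∂(δφ)(k) · Δ(k−1)` is constant in `k` for `1 ≤ k ≤ N`. -/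
theorem discrete_noether_1d (N : ℕ) (L : ℕ → ℝ → ℝ → ℝ)
    (p1 p2 : ℕ → ℝ → ℝ → ℝ)
    (hd : ∀ k a b, HasFDerivAt (fun z : ℝ × ℝ => L k z.1 z.2)
      (p1 k a b • ContinuousLinearMap.fst ℝ ℝ ℝ +
       p2 k a b • ContinuousLinearMap.snd ℝ ℝ ℝ) (a, b))
    (φ Δ : ℕ → ℝ)
    (hinv : ∀ k ≤ N, HasDerivAt (fun t : ℝ =>
        L k (φ k + t * Δ k) ((φ k + t * Δ k) - (φ (k - 1) + t * Δ (k - 1)))) 0 0)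
    (hstat : ∀ j ≤ N, HasDerivAt (fun x : ℝ => ∑ k ∈ Finset.range (N + 1),
        L k (Function.update φ j x k)
          (Function.update φ j x k - Function.update φ j x (k - 1))) 0 (φ j)) :
    ∀ k l, 1 ≤ k → k ≤ N → 1 ≤ l → l ≤ N →
      p2 k (φ k) (φ k - φ (k - 1)) * Δ (k - 1)
        = p2 l (φ l) (φ l - φ (l - 1)) * Δ (l - 1) := by
  let J : ℕ → ℝ := fun k => p2 k (φ k) (φ k - φ (k - 1)) * Δ (k - 1)
  have hstep : ∀ k, 1 ≤ k → k < N → J k = J (k + 1) := by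
    intro k hk hkN
    have hinvk := mul_add_mul_sub_eq_zero_of_hasDerivAt_shift (hd k _ _) (hinv k hkN.le)
    have hEL := (hstat k hkN.le).unique (hasDerivAt_discreteAction_update hd hk hkN φ)
    simp only [J, Nat.add_sub_cancel]
    linear_combination -hinvk - Δ k * hEL
  intro k l hk hkN hl hlN
  exact (Nat.eq_of_forall_eq_succ_of_le hstep hk hkN).trans
    (Nat.eq_of_forall_eq_succ_of_le hstep hl hlN).symm
end

section
/- Existence and uniqueness of currents in a grid network: given a source s (a real function on vertices of the N×N grid vanishing at nonboundary vertices), there exists a function j on oriented edges with ∂j = −s and δj = 0 if and only if the sum of s over all vertices is zero; and if it exists, it is unique. -/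
/-!
Uniqueness is an energy argument. A current `d` without sources has `δd = 0`, so it is a
gradient `d = dφ` (integrate along the bottom row, then up the columns), and summation by parts
gives `∑ d² = ⟨dφ, d⟩ = ⟨φ, ∂d⟩ = 0`.

Existence then follows by counting dimensions. On the finite-dimensional space of edge
functions, the linear map `j ↦ (∂j, δj)` is injective by uniqueness, and its range lies in the
hyperplane `∑ᵥ t v = 0`, since `∑ᵥ ∂j v = 0`. The grid has `(N + 1)²` vertices, `2N(N + 1)`
edges and `N²` faces, so `V - E + F = 1`: the range has the same dimension as the hyperplane,
and so it is the whole hyperplane.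
-/

/-- A function on the edges of the `N×N` grid is given by its values on
horizontal edges `jh i j` (from `(i,j)` to `(i+1,j)`, for `i < N`, `j ≤ N`)
and vertical edges `jv i j` (from `(i,j)` to `(i,j+1)`, for `i ≤ N`, `j < N`).
The boundary `∂j` at the vertex `(i,j)`: incoming minus outgoing values. -/
def gridBdry (N : ℕ) (jh jv : ℕ → ℕ → ℝ) (i j : ℕ) : ℝ :=
  (if 1 ≤ i then jh (i - 1) j else 0) + (if 1 ≤ j then jv i (j - 1) else 0)
    - (if i < N then jh i j else 0) - (if j < N then jv i j else 0)

/-- The coboundary `δj` on the face with minimal vertex `(i,j)` (for `i,j < N`),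
with counterclockwise-oriented boundary. -/
def gridCob (jh jv : ℕ → ℕ → ℝ) (i j : ℕ) : ℝ :=
  jh i j + jv (i + 1) j - jh i (j + 1) - jv i j

/-- The Kirchhoff laws: `∂j = −s` at every vertex and `δj = 0` on every face. -/
def IsCurrent (N : ℕ) (s jh jv : ℕ → ℕ → ℝ) : Prop :=
  (∀ i j, i ≤ N → j ≤ N → gridBdry N jh jv i j = - s i j) ∧
  (∀ i j, i < N → j < N → gridCob jh jv i j = 0)

open Finset

lemma sum_sum_mul_self_eq_zero_iff {R ι κ : Type*} [Semiring R] [LinearOrder R]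
    [IsStrictOrderedRing R] [ExistsAddOfLE R] {s : Finset ι} {t : Finset κ} {f : ι → κ → R} :
    ∑ i ∈ s, ∑ j ∈ t, f i j * f i j = 0 ↔ ∀ i ∈ s, ∀ j ∈ t, f i j = 0 := by
  rw [← sum_product', sum_mul_self_eq_zero_iff _ fun x : ι × κ => f x.1 x.2]
  simp only [mem_product, and_imp, Prod.forall]
  exact ⟨fun h i hi j hj => h i j hi hj, fun h i j hi hj => h i hi j hj⟩

lemma sum_fin_prod_eq_sum_range {M : Type*} [AddCommMonoid M] (m n : ℕ) (g : ℕ → ℕ → M) :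
    ∑ v : Fin m × Fin n, g v.1 v.2 = ∑ i ∈ range m, ∑ j ∈ range n, g i j := by
  simp [Fintype.sum_prod_type, Fin.sum_univ_eq_sum_range (fun i => ∑ j ∈ range n, g i j),
    Fin.sum_univ_eq_sum_range (g _)]

lemma path_sum_mul_bdry (N : ℕ) (φ f : ℕ → ℝ) :
    ∑ i ∈ range (N + 1), φ i * ((if 1 ≤ i then f (i - 1) else 0) - (if i < N then f i else 0))
      = ∑ i ∈ range N, f i * (φ (i + 1) - φ i) := by
  have inflow : ∑ i ∈ range (N + 1), φ i * (if 1 ≤ i then f (i - 1) else 0)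
      = ∑ i ∈ range N, φ (i + 1) * f i := by
    simp [sum_range_succ']
  have outflow : ∑ i ∈ range (N + 1), φ i * (if i < N then f i else 0)
      = ∑ i ∈ range N, φ i * f i := by
    rw [sum_range_succ, if_neg (lt_irrefl N), mul_zero, add_zero]
    exact sum_congr rfl fun i hi => by rw [if_pos (mem_range.mp hi)]
  calc _ = ∑ i ∈ range (N + 1), φ i * (if 1 ≤ i then f (i - 1) else 0)
        - ∑ i ∈ range (N + 1), φ i * (if i < N then f i else 0) := by
        simp only [mul_sub, sum_sub_distrib]
    _ = _ := by
        rw [inflow, outflow, ← sum_sub_distrib]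
        exact sum_congr rfl fun i _ => by ring

/-- Summation by parts: `⟨φ, ∂j⟩ = ⟨dφ, j⟩`. -/
lemma grid_sum_mul_bdry (N : ℕ) (φ jh jv : ℕ → ℕ → ℝ) :
    ∑ i ∈ range (N + 1), ∑ j ∈ range (N + 1), φ i j * gridBdry N jh jv i j
      = ∑ j ∈ range (N + 1), ∑ i ∈ range N, jh i j * (φ (i + 1) j - φ i j)
        + ∑ i ∈ range (N + 1), ∑ j ∈ range N, jv i j * (φ i (j + 1) - φ i j) := by
  have split : ∀ i j, φ i j * gridBdry N jh jv i j
      = φ i j * ((if 1 ≤ i then jh (i - 1) j else 0) - (if i < N then jh i j else 0))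
        + φ i j * ((if 1 ≤ j then jv i (j - 1) else 0) - (if j < N then jv i j else 0)) := by
    intro i j
    rw [gridBdry]
    ring
  simp only [split, sum_add_distrib]
  congr 1
  · rw [sum_comm]
    exact sum_congr rfl fun j _ => path_sum_mul_bdry N (φ · j) (jh · j)
  · exact sum_congr rfl fun i _ => path_sum_mul_bdry N (φ i) (jv i)

lemma grid_sum_bdry (N : ℕ) (jh jv : ℕ → ℕ → ℝ) :
    ∑ i ∈ range (N + 1), ∑ j ∈ range (N + 1), gridBdry N jh jv i j = 0 := by
  simpa using grid_sum_mul_bdry N (fun _ _ => 1) jh jv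

lemma gridBdry_sub (N : ℕ) (jh jv jh' jv' : ℕ → ℕ → ℝ) (i j : ℕ) :
    gridBdry N (jh - jh') (jv - jv') i j = gridBdry N jh jv i j - gridBdry N jh' jv' i j := by
  simp only [gridBdry, Pi.sub_apply]
  split_ifs <;> ring

lemma gridCob_sub (jh jv jh' jv' : ℕ → ℕ → ℝ) (i j : ℕ) :
    gridCob (jh - jh') (jv - jv') i j = gridCob jh jv i j - gridCob jh' jv' i j := by
  simp only [gridCob, Pi.sub_apply]
  ring

lemma exists_potential_of_gridCob_eq_zero {N : ℕ} {jh jv : ℕ → ℕ → ℝ}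
    (hcob : ∀ i j, i < N → j < N → gridCob jh jv i j = 0) :
    ∃ φ : ℕ → ℕ → ℝ, (∀ i j, i < N → j ≤ N → jh i j = φ (i + 1) j - φ i j) ∧
      ∀ i j, jv i j = φ i (j + 1) - φ i j := by
  let φ : ℕ → ℕ → ℝ := fun i j => ∑ k ∈ range i, jh k 0 + ∑ k ∈ range j, jv i k
  have hv : ∀ i j, jv i j = φ i (j + 1) - φ i j := fun i j => by
    simp only [φ, sum_range_succ]
    ring
  refine ⟨φ, fun i j hi hj => ?_, hv⟩
  induction j with
  | zero => simp [φ, sum_range_succ]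
  | succ j ih =>
    have hface := hcob i j hi (by omega)
    rw [gridCob, hv, hv] at hface
    linarith [ih (by omega)]

namespace IsCurrent

variable {N : ℕ} {s jh jv : ℕ → ℕ → ℝ}

lemma sum_source_eq_zero (h : IsCurrent N s jh jv) :
    ∑ i ∈ range (N + 1), ∑ j ∈ range (N + 1), s i j = 0 := by
  have hbdry := grid_sum_bdry N jh jv
  rw [sum_congr rfl fun i hi => sum_congr rfl fun j hj =>
    h.1 i j (mem_range_succ_iff.mp hi) (mem_range_succ_iff.mp hj)] at hbdry
  simpa using hbdry

lemma sub {s' jh' jv' : ℕ → ℕ → ℝ} (h : IsCurrent N s jh jv) (h' : IsCurrent N s' jh' jv') :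
    IsCurrent N (s - s') (jh - jh') (jv - jv') := by
  refine ⟨fun i j hi hj => ?_, fun i j hi hj => ?_⟩
  · rw [gridBdry_sub, h.1 i j hi hj, h'.1 i j hi hj, Pi.sub_apply, Pi.sub_apply]
    ring
  · rw [gridCob_sub, h.2 i j hi hj, h'.2 i j hi hj, sub_zero]

lemma eq_zero_of_source_eq_zero (h : IsCurrent N 0 jh jv) :
    (∀ i j, i < N → j ≤ N → jh i j = 0) ∧ (∀ i j, i ≤ N → j < N → jv i j = 0) := by
  obtain ⟨φ, hh, hv⟩ := exists_potential_of_gridCob_eq_zero h.2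
  have energy : ∑ j ∈ range (N + 1), ∑ i ∈ range N, jh i j * jh i j
      + ∑ i ∈ range (N + 1), ∑ j ∈ range N, jv i j * jv i j = 0 := by
    calc _ = ∑ i ∈ range (N + 1), ∑ j ∈ range (N + 1), φ i j * gridBdry N jh jv i j := by
          rw [grid_sum_mul_bdry]
          congr 1
          · exact sum_congr rfl fun j hj => sum_congr rfl fun i hi => by
              rw [← hh i j (mem_range.mp hi) (mem_range_succ_iff.mp hj)]
          · exact sum_congr rfl fun i _ => sum_congr rfl fun j _ => by rw [← hv i j]
      _ = 0 := sum_eq_zero fun i hi => sum_eq_zero fun j hj => by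
          rw [h.1 i j (mem_range_succ_iff.mp hi) (mem_range_succ_iff.mp hj),
            Pi.zero_apply, Pi.zero_apply, neg_zero, mul_zero]
  obtain ⟨hh0, hv0⟩ := (add_eq_zero_iff_of_nonneg
    (sum_nonneg fun _ _ => sum_nonneg fun _ _ => mul_self_nonneg _)
    (sum_nonneg fun _ _ => sum_nonneg fun _ _ => mul_self_nonneg _)).mp energy
  rw [sum_sum_mul_self_eq_zero_iff] at hh0 hv0
  exact ⟨fun i j hi hj => hh0 j (mem_range_succ_iff.mpr hj) i (mem_range.mpr hi),
    fun i j hi hj => hv0 i (mem_range_succ_iff.mpr hi) j (mem_range.mpr hj)⟩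

lemma unique {jh' jv' : ℕ → ℕ → ℝ} (h : IsCurrent N s jh jv) (h' : IsCurrent N s jh' jv') :
    (∀ i j, i < N → j ≤ N → jh i j = jh' i j) ∧ (∀ i j, i ≤ N → j < N → jv i j = jv' i j) := by
  have hdiff := h.sub h'
  rw [sub_self] at hdiff
  obtain ⟨hh, hv⟩ := hdiff.eq_zero_of_source_eq_zero
  exact ⟨fun i j hi hj => sub_eq_zero.mp (hh i j hi hj),
    fun i j hi hj => sub_eq_zero.mp (hv i j hi hj)⟩

end IsCurrent

def extendByZero (m n : ℕ) : (Fin m × Fin n → ℝ) →ₗ[ℝ] ℕ → ℕ → ℝ where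
  toFun φ i j := if h : i < m ∧ j < n then φ (⟨i, h.1⟩, ⟨j, h.2⟩) else 0
  map_add' φ ψ := by
    ext i j
    simp only [Pi.add_apply]
    split_ifs <;> simp
  map_smul' c φ := by
    ext i j
    simp only [Pi.smul_apply, RingHom.id_apply]
    split_ifs <;> simp

@[simp]
lemma extendByZero_apply_fin {m n : ℕ} (φ : Fin m × Fin n → ℝ) (i : Fin m) (j : Fin n) :
    extendByZero m n φ i j = φ (i, j) := by
  simp [extendByZero]

/-- `j ↦ (∂j, δj)` on the edge functions, with the horizontal edges indexed by
`Fin N × Fin (N + 1)` and the vertical ones by `Fin (N + 1) × Fin N`. -/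
def kirchhoffMap (N : ℕ) :
    (Fin N × Fin (N + 1) → ℝ) × (Fin (N + 1) × Fin N → ℝ) →ₗ[ℝ]
      (Fin (N + 1) × Fin (N + 1) → ℝ) × (Fin N × Fin N → ℝ) where
  toFun j := (fun v => gridBdry N (extendByZero _ _ j.1) (extendByZero _ _ j.2) v.1 v.2,
    fun f => gridCob (extendByZero _ _ j.1) (extendByZero _ _ j.2) f.1 f.2)
  map_add' j k := by
    ext v
    · simp only [Prod.fst_add, Prod.snd_add, map_add, Pi.add_apply, gridBdry]
      split_ifs <;> ring
    · simp only [Prod.fst_add, Prod.snd_add, map_add, Pi.add_apply, gridCob]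
      ring
  map_smul' c j := by
    ext v
    · simp only [Prod.smul_fst, Prod.smul_snd, map_smul, Pi.smul_apply, smul_eq_mul,
        RingHom.id_apply, gridBdry]
      split_ifs <;> ring
    · simp only [Prod.smul_fst, Prod.smul_snd, map_smul, Pi.smul_apply, smul_eq_mul,
        RingHom.id_apply, gridCob]
      ring

lemma isCurrent_of_kirchhoffMap_eq {N : ℕ} {s : ℕ → ℕ → ℝ}
    {j : (Fin N × Fin (N + 1) → ℝ) × (Fin (N + 1) × Fin N → ℝ)}
    (hj : kirchhoffMap N j = (fun v => -s v.1 v.2, 0)) :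
    IsCurrent N s (extendByZero _ _ j.1) (extendByZero _ _ j.2) := by
  refine ⟨fun a b ha hb => ?_, fun a b ha hb => ?_⟩
  · exact congrFun (congrArg Prod.fst hj) (⟨a, by omega⟩, ⟨b, by omega⟩)
  · exact congrFun (congrArg Prod.snd hj) (⟨a, ha⟩, ⟨b, hb⟩)

lemma kirchhoffMap_injective (N : ℕ) : Function.Injective (kirchhoffMap N) := by
  refine (injective_iff_map_eq_zero _).mpr fun j hj => ?_
  have hcur : IsCurrent N 0 (extendByZero _ _ j.1) (extendByZero _ _ j.2) :=
    isCurrent_of_kirchhoffMap_eq (hj.trans (by ext <;> simp))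
  obtain ⟨hh, hv⟩ := hcur.eq_zero_of_source_eq_zero
  ext ⟨a, b⟩
  · simpa using hh a b a.isLt b.is_le
  · simpa using hv a b a.is_le b.isLt

def vertexSum (N : ℕ) : (Fin (N + 1) × Fin (N + 1) → ℝ) × (Fin N × Fin N → ℝ) →ₗ[ℝ] ℝ :=
  (∑ v, LinearMap.proj v) ∘ₗ LinearMap.fst ℝ _ _

lemma vertexSum_apply (N : ℕ) (x : (Fin (N + 1) × Fin (N + 1) → ℝ) × (Fin N × Fin N → ℝ)) :
    vertexSum N x = ∑ v, x.1 v := by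
  simp [vertexSum]

lemma range_kirchhoffMap (N : ℕ) :
    LinearMap.range (kirchhoffMap N) = LinearMap.ker (vertexSum N) := by
  refine Submodule.eq_of_le_of_finrank_le ?_ ?_
  · rintro _ ⟨j, rfl⟩
    rw [LinearMap.mem_ker, vertexSum_apply]
    exact (sum_fin_prod_eq_sum_range _ _ _).trans (grid_sum_bdry _ _ _)
  · have hne : vertexSum N ≠ 0 := fun h => by
      have hone := LinearMap.congr_fun h (fun _ => 1, 0)
      simp [vertexSum_apply] at hone
      linarith
    have hker := Module.Dual.finrank_ker_add_one_of_ne_zero hne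
    rw [LinearMap.finrank_range_of_inj (kirchhoffMap_injective N)]
    simp only [Module.finrank_prod, Module.finrank_fintype_fun_eq_card, Fintype.card_prod,
      Fintype.card_fin] at hker ⊢
    linarith

lemma exists_isCurrent {N : ℕ} {s : ℕ → ℕ → ℝ}
    (hs : ∑ i ∈ range (N + 1), ∑ j ∈ range (N + 1), s i j = 0) :
    ∃ jh jv : ℕ → ℕ → ℝ, IsCurrent N s jh jv := by
  have hmem : ((fun v => -s v.1 v.2, 0) : (Fin (N + 1) × Fin (N + 1) → ℝ) × (Fin N × Fin N → ℝ))
      ∈ LinearMap.range (kirchhoffMap N) := by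
    rw [range_kirchhoffMap, LinearMap.mem_ker, vertexSum_apply]
    simpa using (sum_fin_prod_eq_sum_range _ _ s).trans hs
  obtain ⟨j, hj⟩ := hmem
  exact ⟨_, _, isCurrent_of_kirchhoffMap_eq hj⟩

theorem grid_current_exists_unique_general (N : ℕ) (s : ℕ → ℕ → ℝ) :
    ((∃ jh jv : ℕ → ℕ → ℝ, IsCurrent N s jh jv) ↔
      ∑ i ∈ Finset.range (N + 1), ∑ j ∈ Finset.range (N + 1), s i j = 0) ∧
    (∀ jh jv jh' jv', IsCurrent N s jh jv → IsCurrent N s jh' jv' →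
      (∀ i j, i < N → j ≤ N → jh i j = jh' i j) ∧
      (∀ i j, i ≤ N → j < N → jv i j = jv' i j)) :=
  ⟨⟨fun ⟨_, _, h⟩ => h.sum_source_eq_zero, exists_isCurrent⟩,
    fun _ _ _ _ h h' => h.unique h'⟩

/-- **Existence and uniqueness of currents in a grid network.**
Given a source `s` (a function on the vertices of the `N×N` grid vanishing at
nonboundary vertices), a current generated by `s` (i.e. `∂j = −s`, `δj = 0`)
exists if and only if the sum of `s` over all vertices is zero; and any two
currents generated by `s` agree on all edges. -/
theorem grid_current_exists_unique (N : ℕ) (hN : 0 < N) (s : ℕ → ℕ → ℝ)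
    (hs : ∀ i j, 0 < i → i < N → 0 < j → j < N → s i j = 0) :
    ((∃ jh jv : ℕ → ℕ → ℝ, IsCurrent N s jh jv) ↔
      ∑ i ∈ Finset.range (N + 1), ∑ j ∈ Finset.range (N + 1), s i j = 0) ∧
    (∀ jh jv jh' jv', IsCurrent N s jh jv → IsCurrent N s jh' jv' →
      (∀ i j, i < N → j ≤ N → jh i j = jh' i j) ∧
      (∀ i j, i ≤ N → j < N → jv i j = jv' i j)) :=
  grid_current_exists_unique_general N s
end

section
/- Integration-by-parts identity for the cap-product: for a cochain φ and a cochain ψ with dim ψ ≤ dim φ, ∂(φ⌢ψ) = (−1)^{dim ψ}(∂φ⌢ψ − φ⌢δψ). -/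
open Finset

/- Faces of the grid `I^d_N` are encoded by their doubled centers: a face is a
function `f : Fin d → ℕ` (with `f m ≤ 2N` for faces of the grid), whose odd
coordinates are the directions spanned by the face; its dimension is the number
of odd coordinates.  Vertices have all coordinates even. -/

/-- The set of directions spanned by a face (its odd coordinates). -/
def oddSet (d : ℕ) (f : Fin d → ℕ) : Finset (Fin d) :=
  Finset.univ.filter (fun m => Odd (f m))

/-- The coorientation sign of a face `f` and its facet in direction `l`
(the paper's outer-normal-first convention for the lexicographic ordering):
`(−1)^{#{m < l : f m odd}}`. -/
def csgn (d : ℕ) (f : Fin d → ℕ) (l : Fin d) : ℤ :=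
  (-1) ^ (Finset.univ.filter (fun m => m < l ∧ Odd (f m))).card

/-- The upper neighbour of `f` in direction `l`. -/
def fup (d : ℕ) (f : Fin d → ℕ) (l : Fin d) : Fin d → ℕ := Function.update f l (f l + 1)

/-- The lower neighbour of `f` in direction `l`. -/
def fdn (d : ℕ) (f : Fin d → ℕ) (l : Fin d) : Fin d → ℕ := Function.update f l (f l - 1)

/-- The coboundary `δ` of a cochain: for a `(k+1)`-face `g`,
`[δφ](g) = Σ_{l : g l odd} ±(φ(g_{l↦g l+1}) − φ(g_{l↦g l−1}))`, the signed sum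
of `φ` over the facets of `g`. -/
def cDelta {V : Type*} [AddCommGroup V] (d : ℕ) (φ : (Fin d → ℕ) → V) :
    (Fin d → ℕ) → V :=
  fun g => ∑ l : Fin d,
    if Odd (g l) then csgn d g l • (φ (fup d g l) - φ (fdn d g l)) else 0

/-- The boundary `∂` of a cochain on the grid `I^d_N` (dual to `δ`): for a
`(k−1)`-face `v`, the signed sum of `φ` over the `k`-faces of the grid
containing `v`. -/
def cBdry {V : Type*} [AddCommGroup V] (d N : ℕ) (φ : (Fin d → ℕ) → V) :
    (Fin d → ℕ) → V :=
  fun v => ∑ l : Fin d,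
    if Even (v l) then
      csgn d v l • ((if 0 < v l then φ (fdn d v l) else 0)
        - (if v l < 2 * N then φ (fup d v l) else 0))
    else 0
/- The cap-product: for a face `g = b…c` and a set `T` of directions in which
`g` can be extended downwards (`g m` even and positive), we get the face
`a…c ⊇ g` spanning the directions of `g` together with `T`, and the face `a…b`
spanning the directions `T`; then
`[φ⌢ψ](b…c) = Σ_a ⟨a,b,c⟩ φ(a…c) ψ(a…b)`. -/

/-- The sign `⟨a,b,c⟩` for the extension of `g = b…c` by the directions `T`. -/
def capSg (d : ℕ) (g : Fin d → ℕ) (T : Finset (Fin d)) : ℤ :=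
  (-1) ^ ((T ×ˢ oddSet d g).filter (fun p => p.2 < p.1)).card

/-- The face `a…c` obtained by extending `g = b…c` downwards in directions `T`. -/
def bigFace (d : ℕ) (g : Fin d → ℕ) (T : Finset (Fin d)) : Fin d → ℕ :=
  fun m => if m ∈ T then g m - 1 else g m

/-- The face `a…b`, where `a = min (a…c)` and `b = min (b…c)`. -/
def lowFace (d : ℕ) (g : Fin d → ℕ) (T : Finset (Fin d)) : Fin d → ℕ :=
  fun m => if m ∈ T ∨ m ∈ oddSet d g then g m - 1 else g m

/-- The cap-product `[φ⌢ψ](b…c) = Σ_a ⟨a,b,c⟩ φ(a…c) ψ(a…b)` of matrix-valued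
cochains. -/
noncomputable def capM (d : ℕ) {p q r : ℕ}
    (φ : (Fin d → ℕ) → Matrix (Fin p) (Fin q) ℂ)
    (ψ : (Fin d → ℕ) → Matrix (Fin q) (Fin r) ℂ) :
    (Fin d → ℕ) → Matrix (Fin p) (Fin r) ℂ :=
  fun g => ∑ T : Finset (Fin d),
    if ∀ m ∈ T, Even (g m) ∧ 0 < g m then
      capSg d g T • (φ (bigFace d g T) * ψ (lowFace d g T))
    else 0

lemma mem_oddSet {d : ℕ} {f : Fin d → ℕ} {m : Fin d} : m ∈ oddSet d f ↔ Odd (f m) := by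
  simp [oddSet]

lemma csgn_eq (d : ℕ) (f : Fin d → ℕ) (j : Fin d) :
    csgn d f j = (-1 : ℤ) ^ (((oddSet d f).filter (fun m => m < j)).card) := by
  unfold csgn oddSet
  congr 1
  rw [filter_filter]
  exact congrArg Finset.card (filter_congr (fun m _ => by tauto))

lemma capSg_eq (d : ℕ) (f : Fin d → ℕ) (T : Finset (Fin d)) :
    capSg d f T = (-1 : ℤ) ^ (∑ t ∈ T, ((oddSet d f).filter (fun m => m < t)).card) := by
  unfold capSg
  congr 1
  rw [card_filter, Finset.sum_product]
  exact Finset.sum_congr rfl (fun t _ => by rw [card_filter])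

lemma neg_one_pow_parity (a b : ℕ) (h : a % 2 = b % 2) : ((-1 : ℤ)) ^ a = (-1) ^ b := by
  conv_lhs => rw [← Nat.div_add_mod a 2]
  conv_rhs => rw [← Nat.div_add_mod b 2]
  rw [pow_add, pow_add, pow_mul, pow_mul, h]
  norm_num

section faces
variable {d : ℕ} {g : Fin d → ℕ} {T : Finset (Fin d)} {j : Fin d}

lemma fdn_apply (m : Fin d) : fdn d g j m = if m = j then g j - 1 else g m := by
  simp [fdn, Function.update_apply]
lemma fup_apply (m : Fin d) : fup d g j m = if m = j then g j + 1 else g m := by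
  simp [fup, Function.update_apply]

lemma oddSet_fdn (hje : Even (g j)) (hj0 : 0 < g j) :
    oddSet d (fdn d g j) = insert j (oddSet d g) := by
  ext m
  rcases eq_or_ne m j with rfl | hm
  · simp [mem_oddSet, fdn_apply, Nat.odd_iff, Nat.even_iff] at *
    omega
  · simp [mem_oddSet, fdn_apply, hm]

lemma oddSet_fup (hje : Even (g j)) :
    oddSet d (fup d g j) = insert j (oddSet d g) := by
  ext m
  rcases eq_or_ne m j with rfl | hm
  · simp [mem_oddSet, fup_apply, Nat.odd_iff, Nat.even_iff] at *
    omega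
  · simp [mem_oddSet, fup_apply, hm]

lemma oddSet_bigFace (hT : ∀ m ∈ T, Even (g m) ∧ 0 < g m) :
    oddSet d (bigFace d g T) = T ∪ oddSet d g := by
  ext m
  by_cases hm : m ∈ T
  · obtain ⟨h1, h2⟩ := hT m hm
    simp [mem_oddSet, bigFace, hm, Nat.odd_iff, Nat.even_iff] at *
    omega
  · simp [mem_oddSet, bigFace, hm]

lemma oddSet_lowFace (hT : ∀ m ∈ T, Even (g m) ∧ 0 < g m) :
    oddSet d (lowFace d g T) = T := by
  ext m
  by_cases hm : m ∈ T
  · obtain ⟨h1, h2⟩ := hT m hm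
    have h3 : ¬ Odd (g m) := by rwa [Nat.not_odd_iff_even]
    have hv : lowFace d g T m = g m - 1 := by rw [lowFace, if_pos (Or.inl hm)]
    rw [Nat.even_iff] at h1
    simp only [mem_oddSet, hv, hm, iff_true, Nat.odd_iff]
    omega
  · by_cases ho : Odd (g m)
    · have h1 : 0 < g m := ho.pos
      have hv : lowFace d g T m = g m - 1 := by
        rw [lowFace, if_pos (Or.inr (mem_oddSet.2 ho))]
      rw [Nat.odd_iff] at ho
      simp only [mem_oddSet, hv, hm, iff_false, Nat.odd_iff]
      omega
    · have hv : lowFace d g T m = g m := by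
        rw [lowFace, if_neg (by simp [hm, mem_oddSet, ho])]
      simp only [mem_oddSet, hv, hm, iff_false]
      exact ho

lemma bigFace_fdn (hjT : j ∉ T) :
    bigFace d (fdn d g j) T = bigFace d g (insert j T) := by
  funext m
  rcases eq_or_ne m j with rfl | hm
  · simp [bigFace, fdn_apply, hjT]
  · simp [bigFace, fdn_apply, hm]

lemma bigFace_fup (hjT : j ∉ T) :
    bigFace d (fup d g j) T = fup d (bigFace d g T) j := by
  funext m
  rcases eq_or_ne m j with rfl | hm
  · simp [bigFace, fup_apply, hjT]
  · simp [bigFace, fup_apply, hm]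

lemma fdn_bigFace (hjT : j ∉ T) :
    fdn d (bigFace d g T) j = bigFace d g (insert j T) := by
  funext m
  rcases eq_or_ne m j with rfl | hm
  · simp [bigFace, fdn_apply, hjT]
  · simp [bigFace, fdn_apply, hm]

lemma lowFace_fdn (hje : Even (g j)) (hj0 : 0 < g j) (hjT : j ∉ T) :
    lowFace d (fdn d g j) T = fdn d (lowFace d g (insert j T)) j := by
  have hodd : Odd (fdn d g j j) := by
    rw [fdn_apply, if_pos rfl]
    rw [Nat.even_iff] at hje; rw [Nat.odd_iff]; omega
  funext m
  by_cases hm : m = j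
  · subst hm
    have L : lowFace d (fdn d g m) T m = g m - 1 - 1 := by
      rw [lowFace, if_pos (Or.inr (mem_oddSet.2 hodd)), fdn_apply, if_pos rfl]
    have R : fdn d (lowFace d g (insert m T)) m m = g m - 1 - 1 := by
      rw [fdn_apply, if_pos rfl, lowFace, if_pos (Or.inl (mem_insert_self m T))]
    rw [L, R]
  · have h : fdn d g j m = g m := by rw [fdn_apply, if_neg hm]
    have h2 : fdn d (lowFace d g (insert j T)) j m = lowFace d g (insert j T) m := by
      rw [fdn_apply, if_neg hm]
    rw [h2, lowFace, lowFace]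
    simp only [mem_oddSet, h, mem_insert, hm, false_or]

lemma lowFace_fup (hje : Even (g j)) (hjT : j ∉ T) :
    lowFace d (fup d g j) T = lowFace d g T := by
  funext m
  by_cases hm : m = j
  · subst hm
    have hodd : Odd (fup d g m m) := by
      rw [fup_apply, if_pos rfl]
      rw [Nat.even_iff] at hje; rw [Nat.odd_iff]; omega
    have h2 : ¬ Odd (g m) := by rwa [Nat.not_odd_iff_even]
    rw [lowFace, if_pos (Or.inr (mem_oddSet.2 hodd)), fup_apply, if_pos rfl, lowFace,
      if_neg (by simp [hjT, h2, mem_oddSet])]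
    omega
  · have h : fup d g j m = g m := by rw [fup_apply, if_neg hm]
    rw [lowFace, lowFace]
    simp only [mem_oddSet, h]

lemma fup_lowFace (hje : Even (g j)) (hj0 : 0 < g j) (hjU : j ∈ T) :
    fup d (lowFace d g T) j = lowFace d g (T.erase j) := by
  funext m
  by_cases hm : m = j
  · subst hm
    have h2 : ¬ Odd (g m) := by rwa [Nat.not_odd_iff_even]
    rw [fup_apply, if_pos rfl, lowFace, if_pos (Or.inl hjU), lowFace,
      if_neg (by simp [h2, mem_oddSet])]
    omega
  · rw [fup_apply, if_neg hm, lowFace, lowFace]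
    simp only [mem_oddSet, mem_erase, ne_eq, hm, not_false_eq_true, true_and]

lemma oddSet_fdn_lowFace (hT : ∀ m ∈ T, Even (g m) ∧ 0 < g m) (hjU : j ∈ T) :
    oddSet d (fdn d (lowFace d g T) j) = T.erase j := by
  obtain ⟨h1, h2⟩ := hT j hjU
  have hL : oddSet d (lowFace d g T) = T := oddSet_lowFace hT
  ext m
  by_cases hm : m = j
  · subst hm
    have hv : lowFace d g T m = g m - 1 := by rw [lowFace, if_pos (Or.inl hjU)]
    have : fdn d (lowFace d g T) m m = g m - 1 - 1 := by rw [fdn_apply, if_pos rfl, hv]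
    rw [Nat.even_iff] at h1
    simp only [mem_oddSet, this, mem_erase, ne_eq, not_true_eq_false, false_and,
      iff_false, Nat.odd_iff]
    omega
  · have : fdn d (lowFace d g T) j m = lowFace d g T m := by rw [fdn_apply, if_neg hm]
    rw [mem_oddSet, this, ← mem_oddSet, hL, mem_erase]
    simp [hm]

end faces

section signs
variable {d : ℕ} {g : Fin d → ℕ} {T : Finset (Fin d)} {j : Fin d} {l : ℕ}

lemma sum_insert_filter (S : Finset (Fin d)) (T : Finset (Fin d)) (j : Fin d) (hjS : j ∉ S) :
    ∑ t ∈ T, (((insert j S)).filter (fun m => m < t)).card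
      = (∑ t ∈ T, (S.filter (fun m => m < t)).card) + (T.filter (fun t => j < t)).card := by
  rw [card_filter, ← Finset.sum_add_distrib]
  refine Finset.sum_congr rfl (fun t _ => ?_)
  by_cases hjt : j < t
  · rw [filter_insert, if_pos hjt, card_insert_of_notMem (by simp [hjS]), if_pos hjt]
  · rw [filter_insert, if_neg hjt, if_neg hjt, add_zero]

lemma filter_lt_split (hjT : j ∉ T) :
    (T.filter (fun m => m < j)).card + (T.filter (fun t => j < t)).card = T.card := by
  have h : T.filter (fun t => j < t) = T.filter (fun m => ¬ m < j) := by
    refine filter_congr (fun t ht => ?_)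
    have hne : t ≠ j := fun h => hjT (h ▸ ht)
    simp only [not_lt, eq_iff_iff]
    constructor
    · exact le_of_lt
    · exact fun h => lt_of_le_of_ne h (Ne.symm hne)
  rw [h, Finset.card_filter_add_card_filter_not (p := fun m => m < j)]

lemma card_union_filter (hT : ∀ m ∈ T, Even (g m) ∧ 0 < g m) :
    ((T ∪ oddSet d g).filter (fun m => m < j)).card
      = (T.filter (fun m => m < j)).card + ((oddSet d g).filter (fun m => m < j)).card := by
  rw [filter_union, card_union_of_disjoint]
  refine disjoint_filter_filter ?_
  rw [Finset.disjoint_left]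
  intro a ha hb
  exact (Nat.not_odd_iff_even.2 (hT a ha).1) (mem_oddSet.1 hb)

lemma hjS_of_even (hje : Even (g j)) : j ∉ oddSet d g := by
  simp [mem_oddSet, Nat.not_odd_iff_even, hje]

/-- identity (I3): `B = D`. -/
lemma signI3 (hje : Even (g j)) (hjT : j ∉ T) (hT : ∀ m ∈ T, Even (g m) ∧ 0 < g m)
    (hl : T.card = l) :
    csgn d g j * capSg d (fup d g j) T
      = (-1 : ℤ) ^ l * (capSg d g T * csgn d (bigFace d g T) j) := by
  rw [csgn_eq, csgn_eq, capSg_eq, capSg_eq, oddSet_fup hje, oddSet_bigFace hT,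
    sum_insert_filter _ _ _ (hjS_of_even hje), card_union_filter hT,
    ← pow_add, ← pow_add, ← pow_add]
  apply neg_one_pow_parity
  have := filter_lt_split hjT
  omega

/-- identity (I2): `C = E1`. -/
lemma signI2 (hje : Even (g j)) (hj0 : 0 < g j) (hjT : j ∉ T)
    (hT : ∀ m ∈ T, Even (g m) ∧ 0 < g m) :
    capSg d g T * csgn d (bigFace d g T) j
      = capSg d g (insert j T) * csgn d (lowFace d g (insert j T)) j := by
  have hU : ∀ m ∈ insert j T, Even (g m) ∧ 0 < g m := by
    intro m hm
    rcases mem_insert.1 hm with rfl | hm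
    · exact ⟨hje, hj0⟩
    · exact hT m hm
  rw [csgn_eq, csgn_eq, capSg_eq, capSg_eq, oddSet_bigFace hT, oddSet_lowFace hU,
    card_union_filter hT, Finset.sum_insert hjT, filter_insert, if_neg (lt_irrefl j),
    ← pow_add, ← pow_add]
  apply neg_one_pow_parity
  omega

/-- identity (I1): `A = E2`. -/
lemma signI1 (hje : Even (g j)) (hj0 : 0 < g j) (hjT : j ∉ T)
    (hT : ∀ m ∈ T, Even (g m) ∧ 0 < g m) (hl : T.card = l) :
    csgn d g j * capSg d (fdn d g j) T
      = (-1 : ℤ) ^ l * (capSg d g (insert j T) * csgn d (lowFace d g (insert j T)) j) := by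
  have h1 : capSg d (fdn d g j) T = capSg d (fup d g j) T := by
    rw [capSg_eq, capSg_eq, oddSet_fdn hje hj0, oddSet_fup hje]
  rw [h1, signI3 hje hjT hT hl, signI2 hje hj0 hjT hT]

end signs

section main
variable {d N p q r : ℕ}
  (φ : (Fin d → ℕ) → Matrix (Fin p) (Fin q) ℂ)
  (ψ : (Fin d → ℕ) → Matrix (Fin q) (Fin r) ℂ)
  (g : Fin d → ℕ)

noncomputable def Lterm (d N : ℕ) {p q r : ℕ}
    (φ : (Fin d → ℕ) → Matrix (Fin p) (Fin q) ℂ)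
    (ψ : (Fin d → ℕ) → Matrix (Fin q) (Fin r) ℂ)
    (g : Fin d → ℕ) (j : Fin d) (T : Finset (Fin d)) : Matrix (Fin p) (Fin r) ℂ :=
  if Even (g j) ∧ j ∉ T ∧ ∀ m ∈ T, Even (g m) ∧ 0 < g m then
    csgn d g j • ((if 0 < g j then
        capSg d (fdn d g j) T • (φ (bigFace d (fdn d g j) T) * ψ (lowFace d (fdn d g j) T)) else 0)
      - (if g j < 2*N then
        capSg d (fup d g j) T • (φ (bigFace d (fup d g j) T) * ψ (lowFace d (fup d g j) T)) else 0))
  else 0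

noncomputable def Rterm (d N l : ℕ) {p q r : ℕ}
    (φ : (Fin d → ℕ) → Matrix (Fin p) (Fin q) ℂ)
    (ψ : (Fin d → ℕ) → Matrix (Fin q) (Fin r) ℂ)
    (g : Fin d → ℕ) (T : Finset (Fin d)) (j : Fin d) : Matrix (Fin p) (Fin r) ℂ :=
  if ∀ m ∈ T, Even (g m) ∧ 0 < g m then
    ((-1 : ℤ)^l) • (capSg d g T •
        ((if Even (bigFace d g T j) then
            csgn d (bigFace d g T) j •
              ((if 0 < bigFace d g T j then φ (fdn d (bigFace d g T) j) else 0)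
                - (if bigFace d g T j < 2*N then φ (fup d (bigFace d g T) j) else 0))
          else 0) * ψ (lowFace d g T))
      - capSg d g T • (φ (bigFace d g T) *
          (if Odd (lowFace d g T j) then
            csgn d (lowFace d g T) j •
              (ψ (fup d (lowFace d g T) j) - ψ (fdn d (lowFace d g T) j))
          else 0)))
  else 0

lemma Pdn_iff {j : Fin d} {T : Finset (Fin d)} (hje : Even (g j)) :
    (∀ m ∈ T, Even (fdn d g j m) ∧ 0 < fdn d g j m)
      ↔ (j ∉ T ∧ ∀ m ∈ T, Even (g m) ∧ 0 < g m) := by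
  constructor
  · intro h
    have hjT : j ∉ T := by
      intro hjT
      obtain ⟨h1, h2⟩ := h j hjT
      rw [fdn_apply, if_pos rfl] at h1 h2
      rw [Nat.even_iff] at hje h1
      omega
    refine ⟨hjT, fun m hm => ?_⟩
    have hmj : m ≠ j := fun e => hjT (e ▸ hm)
    have := h m hm
    rwa [fdn_apply, if_neg hmj] at this
  · rintro ⟨hjT, h⟩ m hm
    have hmj : m ≠ j := fun e => hjT (e ▸ hm)
    rw [fdn_apply, if_neg hmj]
    exact h m hm

lemma Pup_iff {j : Fin d} {T : Finset (Fin d)} (hje : Even (g j)) :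
    (∀ m ∈ T, Even (fup d g j m) ∧ 0 < fup d g j m)
      ↔ (j ∉ T ∧ ∀ m ∈ T, Even (g m) ∧ 0 < g m) := by
  constructor
  · intro h
    have hjT : j ∉ T := by
      intro hjT
      obtain ⟨h1, h2⟩ := h j hjT
      rw [fup_apply, if_pos rfl] at h1
      rw [Nat.even_iff] at hje h1
      omega
    refine ⟨hjT, fun m hm => ?_⟩
    have hmj : m ≠ j := fun e => hjT (e ▸ hm)
    have := h m hm
    rwa [fup_apply, if_neg hmj] at this
  · rintro ⟨hjT, h⟩ m hm
    have hmj : m ≠ j := fun e => hjT (e ▸ hm)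
    rw [fup_apply, if_neg hmj]
    exact h m hm

lemma stepL : cBdry d N (capM d φ ψ) g = ∑ j : Fin d, ∑ T : Finset (Fin d), Lterm d N φ ψ g j T := by
  unfold cBdry
  refine Finset.sum_congr rfl (fun j _ => ?_)
  by_cases hje : Even (g j)
  · rw [if_pos hje]
    have e1 : (if 0 < g j then capM d φ ψ (fdn d g j) else 0)
        = ∑ T : Finset (Fin d), if j ∉ T ∧ ∀ m ∈ T, Even (g m) ∧ 0 < g m then
            (if 0 < g j then
              capSg d (fdn d g j) T • (φ (bigFace d (fdn d g j) T) * ψ (lowFace d (fdn d g j) T))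
            else 0) else 0 := by
      by_cases hj0 : 0 < g j
      · rw [if_pos hj0]
        unfold capM
        refine Finset.sum_congr rfl (fun T _ => ?_)
        by_cases hG : j ∉ T ∧ ∀ m ∈ T, Even (g m) ∧ 0 < g m
        · rw [if_pos ((Pdn_iff g hje).2 hG), if_pos hG, if_pos hj0]
        · rw [if_neg (fun h => hG ((Pdn_iff g hje).1 h)), if_neg hG]
      · rw [if_neg hj0]
        simp [hj0]
    have e2 : (if g j < 2*N then capM d φ ψ (fup d g j) else 0)
        = ∑ T : Finset (Fin d), if j ∉ T ∧ ∀ m ∈ T, Even (g m) ∧ 0 < g m then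
            (if g j < 2*N then
              capSg d (fup d g j) T • (φ (bigFace d (fup d g j) T) * ψ (lowFace d (fup d g j) T))
            else 0) else 0 := by
      by_cases hjN : g j < 2*N
      · rw [if_pos hjN]
        unfold capM
        refine Finset.sum_congr rfl (fun T _ => ?_)
        by_cases hG : j ∉ T ∧ ∀ m ∈ T, Even (g m) ∧ 0 < g m
        · rw [if_pos ((Pup_iff g hje).2 hG), if_pos hG, if_pos hjN]
        · rw [if_neg (fun h => hG ((Pup_iff g hje).1 h)), if_neg hG]
      · rw [if_neg hjN]
        simp [hjN]
    rw [e1, e2, ← Finset.sum_sub_distrib, Finset.smul_sum]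
    refine Finset.sum_congr rfl (fun T _ => ?_)
    unfold Lterm
    by_cases hG : j ∉ T ∧ ∀ m ∈ T, Even (g m) ∧ 0 < g m
    · rw [if_pos (show Even (g j) ∧ j ∉ T ∧ (∀ m ∈ T, Even (g m) ∧ 0 < g m) from ⟨hje, hG⟩),
        if_pos hG, if_pos hG]
    · rw [if_neg hG, if_neg hG, if_neg (fun h => hG h.2), sub_zero, smul_zero]
  · rw [if_neg hje]
    have : ∀ T : Finset (Fin d), Lterm d N φ ψ g j T = 0 := by
      intro T
      unfold Lterm
      rw [if_neg (fun h => hje h.1)]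
    simp [this]

lemma stepR (l : ℕ) :
    ((-1 : ℤ)^l) • (capM d (cBdry d N φ) ψ g - capM d φ (cDelta d ψ) g)
      = ∑ T : Finset (Fin d), ∑ j : Fin d, Rterm d N l φ ψ g T j := by
  unfold capM
  rw [← Finset.sum_sub_distrib, Finset.smul_sum]
  refine Finset.sum_congr rfl (fun T _ => ?_)
  by_cases hT : ∀ m ∈ T, Even (g m) ∧ 0 < g m
  · rw [if_pos hT, if_pos hT]
    unfold cBdry cDelta
    rw [Matrix.sum_mul, Matrix.mul_sum, Finset.smul_sum, Finset.smul_sum,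
      ← Finset.sum_sub_distrib, Finset.smul_sum]
    refine Finset.sum_congr rfl (fun j _ => ?_)
    unfold Rterm
    rw [if_pos hT]
  · rw [if_neg hT, if_neg hT]
    have : ∀ j : Fin d, Rterm d N l φ ψ g T j = 0 := by
      intro j
      unfold Rterm
      rw [if_neg hT]
    simp [this]

lemma core (l : ℕ) (hψ : ∀ f, ψ f ≠ 0 → (oddSet d f).card = l)
    (j : Fin d) (T : Finset (Fin d)) (hjT : j ∉ T) :
    Lterm d N φ ψ g j T = Rterm d N l φ ψ g T j + Rterm d N l φ ψ g (insert j T) j := by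
  by_cases hT : ∀ m ∈ T, Even (g m) ∧ 0 < g m
  · by_cases hje : Even (g j)
    · by_cases hj0 : 0 < g j
      · -- main case
        have hU : ∀ m ∈ insert j T, Even (g m) ∧ 0 < g m := by
          intro m hm
          rcases mem_insert.1 hm with rfl | hm
          · exact ⟨hje, hj0⟩
          · exact hT m hm
        have hB : bigFace d g T j = g j := by simp [bigFace, hjT]
        have hLj : ¬ Odd (lowFace d g T j) := by
          have : lowFace d g T j = g j := by
            simp [lowFace, hjT, mem_oddSet, Nat.not_odd_iff_even.2 hje]
          rw [this, Nat.not_odd_iff_even]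
          exact hje
        have hBU : ¬ Even (bigFace d g (insert j T) j) := by
          have : bigFace d g (insert j T) j = g j - 1 := by simp [bigFace]
          rw [this, Nat.not_even_iff_odd, Nat.odd_iff]
          rw [Nat.even_iff] at hje
          omega
        have hLU : Odd (lowFace d g (insert j T) j) := by
          have : lowFace d g (insert j T) j = g j - 1 := by simp [lowFace]
          rw [this, Nat.odd_iff]
          rw [Nat.even_iff] at hje
          omega
        unfold Lterm Rterm
        rw [if_pos (show Even (g j) ∧ j ∉ T ∧ (∀ m ∈ T, Even (g m) ∧ 0 < g m) from ⟨hje, hjT, hT⟩),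
          if_pos hT, if_pos hU, if_pos hj0, hB, if_pos hje, if_pos hj0, if_neg hBU,
          if_neg hLj, if_pos hLU, bigFace_fdn hjT, lowFace_fdn hje hj0 hjT,
          bigFace_fup hjT, lowFace_fup hje hjT, fdn_bigFace hjT,
          fup_lowFace hje hj0 (mem_insert_self j T), erase_insert hjT]
        have key2 := signI2 (g := g) hje hj0 hjT hT
        rcases eq_or_ne (ψ (fdn d (lowFace d g (insert j T)) j)) 0 with h2 | h2 <;>
          rcases eq_or_ne (ψ (lowFace d g T)) 0 with h4 | h4
        · simp [h2, h4]
        · have hl : T.card = l := by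
            have := hψ _ h4
            rwa [oddSet_lowFace hT] at this
          have key3 := signI3 (g := g) hje hjT hT hl
          simp only [h2, Matrix.mul_zero, smul_zero, sub_zero, zero_sub, Matrix.zero_mul]
          split_ifs with hc
          · simp only [smul_neg, smul_zero, zero_sub, sub_zero, Matrix.mul_zero,
              Matrix.zero_mul, Matrix.smul_mul, Matrix.mul_smul, Matrix.sub_mul,
              Matrix.mul_sub, Matrix.neg_mul, Matrix.mul_neg, neg_neg, neg_smul, smul_sub,
              smul_smul, add_zero, zero_add]
            match_scalars
            · linear_combination -key3
            · linear_combination (-((-1 : ℤ)^l)) * key2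
          · simp only [smul_neg, smul_zero, zero_sub, sub_zero, Matrix.mul_zero,
              Matrix.zero_mul, Matrix.smul_mul, Matrix.mul_smul, Matrix.sub_mul,
              Matrix.mul_sub, Matrix.neg_mul, Matrix.mul_neg, neg_neg, neg_smul, smul_sub,
              smul_smul, add_zero, zero_add]
            match_scalars
            linear_combination (-((-1 : ℤ)^l)) * key2
        · have hl : T.card = l := by
            have := hψ _ h2
            rwa [oddSet_fdn_lowFace hU (mem_insert_self j T), erase_insert hjT] at this
          have key1 := signI1 (g := g) hje hj0 hjT hT hl
          simp only [h4, Matrix.mul_zero, smul_zero, sub_zero, zero_sub, Matrix.zero_mul]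
          split_ifs with hc
          · simp only [smul_neg, smul_zero, zero_sub, sub_zero, Matrix.mul_zero,
              Matrix.zero_mul, Matrix.smul_mul, Matrix.mul_smul, Matrix.sub_mul,
              Matrix.mul_sub, Matrix.neg_mul, Matrix.mul_neg, neg_neg, neg_smul, smul_sub,
              smul_smul, add_zero, zero_add]
            match_scalars
            linear_combination key1
          · simp only [smul_neg, smul_zero, zero_sub, sub_zero, Matrix.mul_zero,
              Matrix.zero_mul, Matrix.smul_mul, Matrix.mul_smul, Matrix.sub_mul,
              Matrix.mul_sub, Matrix.neg_mul, Matrix.mul_neg, neg_neg, neg_smul, smul_sub,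
              smul_smul, add_zero, zero_add]
            match_scalars
            linear_combination key1
        · have hl : T.card = l := by
            have := hψ _ h4
            rwa [oddSet_lowFace hT] at this
          have key1 := signI1 (g := g) hje hj0 hjT hT hl
          have key3 := signI3 (g := g) hje hjT hT hl
          simp only [Matrix.zero_mul]
          split_ifs with hc
          · simp only [smul_neg, smul_zero, zero_sub, sub_zero, Matrix.mul_zero,
              Matrix.zero_mul, Matrix.smul_mul, Matrix.mul_smul, Matrix.sub_mul,
              Matrix.mul_sub, Matrix.neg_mul, Matrix.mul_neg, neg_neg, neg_smul, smul_sub,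
              smul_smul, add_zero, zero_add]
            match_scalars
            · linear_combination key1
            · linear_combination -key3
            · linear_combination (-((-1 : ℤ)^l)) * key2
          · simp only [smul_neg, smul_zero, zero_sub, sub_zero, Matrix.mul_zero,
              Matrix.zero_mul, Matrix.smul_mul, Matrix.mul_smul, Matrix.sub_mul,
              Matrix.mul_sub, Matrix.neg_mul, Matrix.mul_neg, neg_neg, neg_smul, smul_sub,
              smul_smul, add_zero, zero_add]
            match_scalars
            · linear_combination key1
            · linear_combination (-((-1 : ℤ)^l)) * key2
      · -- g j = 0
        have hU : ¬ ∀ m ∈ insert j T, Even (g m) ∧ 0 < g m :=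
          fun h => hj0 (h j (mem_insert_self j T)).2
        have hB : bigFace d g T j = g j := by simp [bigFace, hjT]
        have hLj : ¬ Odd (lowFace d g T j) := by
          have : lowFace d g T j = g j := by
            simp [lowFace, hjT, mem_oddSet, Nat.not_odd_iff_even.2 hje]
          rw [this, Nat.not_odd_iff_even]
          exact hje
        unfold Lterm Rterm
        rw [if_pos (show Even (g j) ∧ j ∉ T ∧ (∀ m ∈ T, Even (g m) ∧ 0 < g m) from ⟨hje, hjT, hT⟩),
          if_pos hT, if_neg hU, if_neg hj0, hB, if_pos hje, if_neg hj0, if_neg hLj,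
          bigFace_fup hjT, lowFace_fup hje hjT, add_zero]
        rcases eq_or_ne (ψ (lowFace d g T)) 0 with h4 | h4
        · simp [h4]
        · have hl : T.card = l := by
            have := hψ _ h4
            rwa [oddSet_lowFace hT] at this
          have key3 := signI3 (g := g) hje hjT hT hl
          split_ifs with hc
          · simp only [zero_sub, smul_neg, Matrix.mul_zero, smul_zero, sub_zero,
              Matrix.neg_mul, Matrix.smul_mul, smul_smul]
            match_scalars
            linear_combination -key3
          · simp
    · -- g j odd
      have hOddj : Odd (g j) := Nat.not_even_iff_odd.1 hje
      have hU : ¬ ∀ m ∈ insert j T, Even (g m) ∧ 0 < g m :=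
        fun h => hje (h j (mem_insert_self j T)).1
      have h1 : ¬ Even (bigFace d g T j) := by
        have : bigFace d g T j = g j := by simp [bigFace, hjT]
        rw [this]
        exact hje
      have h2 : ¬ Odd (lowFace d g T j) := by
        have : lowFace d g T j = g j - 1 := by simp [lowFace, hjT, mem_oddSet, hOddj]
        rw [this, Nat.not_odd_iff_even, Nat.even_iff]
        rw [Nat.odd_iff] at hOddj
        omega
      unfold Lterm Rterm
      rw [if_neg (fun h => hje h.1), if_pos hT, if_neg hU, if_neg h1, if_neg h2, add_zero]
      simp
  · have hU : ¬ ∀ m ∈ insert j T, Even (g m) ∧ 0 < g m :=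
      fun h => hT (fun m hm => h m (mem_insert_of_mem hm))
    unfold Lterm Rterm
    rw [if_neg (fun h => hT h.2.2), if_neg hT, if_neg hU, add_zero]

lemma Lterm_zero (j : Fin d) (T : Finset (Fin d)) (hjT : j ∈ T) :
    Lterm d N φ ψ g j T = 0 := by
  unfold Lterm
  rw [if_neg (fun h => h.2.1 hjT)]

lemma perJ (l : ℕ) (hψ : ∀ f, ψ f ≠ 0 → (oddSet d f).card = l) (j : Fin d) :
    ∑ T : Finset (Fin d), Lterm d N φ ψ g j T
      = ∑ T : Finset (Fin d), Rterm d N l φ ψ g T j := by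
  classical
  rw [← Finset.sum_filter_add_sum_filter_not Finset.univ (fun T => j ∉ T)
    (fun T => Lterm d N φ ψ g j T),
    ← Finset.sum_filter_add_sum_filter_not Finset.univ (fun T => j ∉ T)
    (fun T => Rterm d N l φ ψ g T j)]
  have hz : ∑ T ∈ Finset.univ.filter (fun T => ¬ j ∉ T), Lterm d N φ ψ g j T = 0 := by
    refine Finset.sum_eq_zero (fun T hT => ?_)
    exact Lterm_zero φ ψ g j T (not_not.1 (Finset.mem_filter.1 hT).2)
  rw [hz, add_zero]
  have hbij : ∑ T ∈ Finset.univ.filter (fun T => ¬ j ∉ T), Rterm d N l φ ψ g T j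
      = ∑ T ∈ Finset.univ.filter (fun T => j ∉ T), Rterm d N l φ ψ g (insert j T) j := by
    refine Finset.sum_bij' (fun T _ => T.erase j) (fun T _ => insert j T) ?_ ?_ ?_ ?_ ?_
    · intro T hT
      simp
    · intro T hT
      simp
    · intro T hT
      exact Finset.insert_erase (not_not.1 (Finset.mem_filter.1 hT).2)
    · intro T hT
      exact Finset.erase_insert (Finset.mem_filter.1 hT).2
    · intro T hT
      rw [Finset.insert_erase (not_not.1 (Finset.mem_filter.1 hT).2)]
  rw [hbij, ← Finset.sum_add_distrib]
  refine Finset.sum_congr rfl (fun T hT => ?_)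
  exact core φ ψ g l hψ j T (Finset.mem_filter.1 hT).2

end main

/-- **Integration-by-parts identity for the cap-product.**
For a `k`-cochain `φ` and an `l`-cochain `ψ` (`l ≤ k`) on the grid `I^d_N`,
`∂(φ⌢ψ) = (−1)^l (∂φ⌢ψ − φ⌢δψ)` on all faces of the grid. -/
theorem cap_integration_by_parts (d N p q r k l : ℕ) (hlk : l ≤ k)
    (φ : (Fin d → ℕ) → Matrix (Fin p) (Fin q) ℂ)
    (ψ : (Fin d → ℕ) → Matrix (Fin q) (Fin r) ℂ)
    (hφ : ∀ f, φ f ≠ 0 → (oddSet d f).card = k)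
    (hψ : ∀ f, ψ f ≠ 0 → (oddSet d f).card = l) :
    ∀ g : Fin d → ℕ, (∀ m, g m ≤ 2 * N) →
      cBdry d N (capM d φ ψ) g
        = ((-1 : ℤ) ^ l) • (capM d (cBdry d N φ) ψ g - capM d φ (cDelta d ψ) g) := by
  intro g _
  rw [stepL φ ψ g, stepR φ ψ g l]
  calc ∑ j : Fin d, ∑ T : Finset (Fin d), Lterm d N φ ψ g j T
      = ∑ j : Fin d, ∑ T : Finset (Fin d), Rterm d N l φ ψ g T j :=
        Finset.sum_congr rfl (fun j _ => perJ φ ψ g l hψ j)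
    _ = ∑ T : Finset (Fin d), ∑ j : Fin d, Rterm d N l φ ψ g T j := Finset.sum_comm
end

section
/- Flatness criterion on the grid: a gauge group field U on the edges of the grid I^d_N is a gauge transformation of the unit field (i.e. U(ab) = g(a)*g(b) for some G-valued vertex function g) if and only if its curvature F[U] vanishes on every 2-face. -/
open Matrix

open Finset

/- A 2-face of the grid with minimal vertex `a` (doubled coordinates, all even)
spanning the directions `i < j` has vertices `a, b = a + 2eᵢ, c = a + 2eᵢ + 2eⱼ,
d = a + 2eⱼ`, listed counterclockwise from the minimal vertex `a` (so that the
maximal vertex is `c`); its center and the centers of its four edges are: -/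

/-- The 2-face `abcd` itself (its doubled center). -/
def twoFace (d : ℕ) (a : Fin d → ℕ) (i j : Fin d) : Fin d → ℕ :=
  fun m => a m + (if m = i then 1 else 0) + (if m = j then 1 else 0)

/-- The edge `ab`. -/
def edgeAB (d : ℕ) (a : Fin d → ℕ) (i j : Fin d) : Fin d → ℕ :=
  fun m => a m + (if m = i then 1 else 0)

/-- The edge `bc`. -/
def edgeBC (d : ℕ) (a : Fin d → ℕ) (i j : Fin d) : Fin d → ℕ :=
  fun m => a m + (if m = i then 2 else 0) + (if m = j then 1 else 0)

/-- The edge `ad`. -/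
def edgeAD (d : ℕ) (a : Fin d → ℕ) (i j : Fin d) : Fin d → ℕ :=
  fun m => a m + (if m = j then 1 else 0)

/-- The edge `dc`. -/
def edgeDC (d : ℕ) (a : Fin d → ℕ) (i j : Fin d) : Fin d → ℕ :=
  fun m => a m + (if m = i then 1 else 0) + (if m = j then 2 else 0)

/-- The minimal vertex of a face (round all odd doubled coordinates down). -/
def lowerV (d : ℕ) (f : Fin d → ℕ) : Fin d → ℕ :=
  fun m => if Odd (f m) then f m - 1 else f m

/-- The maximal vertex of a face (round all odd doubled coordinates up). -/
def upperV (d : ℕ) (f : Fin d → ℕ) : Fin d → ℕ :=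
  fun m => if Odd (f m) then f m + 1 else f m

namespace FlatAux


def up2 (d : ℕ) (v : Fin d → ℕ) (l : Fin d) : Fin d → ℕ := Function.update v l (v l + 2)
def dn2 (d : ℕ) (v : Fin d → ℕ) (l : Fin d) : Fin d → ℕ := Function.update v l (v l - 2)

variable {n : ℕ}

noncomputable def gA (d : ℕ) (U : (Fin d → ℕ) → Matrix (Fin n) (Fin n) ℂ) :
    ℕ → (Fin d → ℕ) → Matrix (Fin n) (Fin n) ℂ
  | 0, _ => 1
  | k+1, v =>
    if h : (Finset.univ.filter fun m => v m ≠ 0).Nonempty then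
      gA d U k (dn2 d v ((Finset.univ.filter fun m => v m ≠ 0).max' h)) *
        U (fup d (dn2 d v ((Finset.univ.filter fun m => v m ≠ 0).max' h))
            ((Finset.univ.filter fun m => v m ≠ 0).max' h))
    else 1

lemma gA_zero (d : ℕ) (U : (Fin d → ℕ) → Matrix (Fin n) (Fin n) ℂ) (v : Fin d → ℕ) :
    gA d U 0 v = 1 := rfl

lemma gA_succ (d : ℕ) (U : (Fin d → ℕ) → Matrix (Fin n) (Fin n) ℂ) (k : ℕ) (v : Fin d → ℕ) :
    gA d U (k+1) v =
    if h : (Finset.univ.filter fun m => v m ≠ 0).Nonempty then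
      gA d U k (dn2 d v ((Finset.univ.filter fun m => v m ≠ 0).max' h)) *
        U (fup d (dn2 d v ((Finset.univ.filter fun m => v m ≠ 0).max' h))
            ((Finset.univ.filter fun m => v m ≠ 0).max' h))
    else 1 := rfl

noncomputable def gfun (d : ℕ) (U : (Fin d → ℕ) → Matrix (Fin n) (Fin n) ℂ) (v : Fin d → ℕ) :
    Matrix (Fin n) (Fin n) ℂ := gA d U (∑ m, v m) v

lemma sum_update_lin (d : ℕ) (v : Fin d → ℕ) (l : Fin d) (x : ℕ) :
    (∑ m, Function.update v l x m) + v l = (∑ m, v m) + x := by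
  have h1 : (∑ m, Function.update v l x m) = x + ∑ m ∈ Finset.univ \ {l}, v m :=
    Finset.sum_update_of_mem (Finset.mem_univ l) v x
  have h2 : v l + ∑ m ∈ Finset.univ.erase l, v m = ∑ m, v m :=
    Finset.add_sum_erase _ v (Finset.mem_univ l)
  rw [← Finset.erase_eq] at h1
  omega

lemma sum_up2 (d : ℕ) (v : Fin d → ℕ) (l : Fin d) :
    (∑ m, up2 d v l m) = (∑ m, v m) + 2 := by
  have := sum_update_lin d v l (v l + 2)
  simp only [up2]; omega

lemma sum_dn2 (d : ℕ) (v : Fin d → ℕ) (l : Fin d) (h : v l ≠ 0) :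
    (∑ m, dn2 d v l m) < ∑ m, v m := by
  have := sum_update_lin d v l (v l - 2)
  simp only [dn2]; omega

lemma sum_dn2_eq (d : ℕ) (v : Fin d → ℕ) (l : Fin d) (h : 2 ≤ v l) :
    (∑ m, dn2 d v l m) + 2 = ∑ m, v m := by
  have := sum_update_lin d v l (v l - 2)
  simp only [dn2]; omega

lemma gA_succ_eq (d : ℕ) (U : (Fin d → ℕ) → Matrix (Fin n) (Fin n) ℂ) :
    ∀ (k : ℕ) (v : Fin d → ℕ), (∑ m, v m) ≤ k → gA d U (k+1) v = gA d U k v := by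
  intro k
  induction k with
  | zero =>
    intro v hv
    have hz : ∀ m, v m = 0 := by
      intro m
      have := Finset.single_le_sum (f := v) (fun i _ => Nat.zero_le _) (Finset.mem_univ m)
      omega
    have hne : ¬ (Finset.univ.filter fun m => v m ≠ 0).Nonempty := by
      rintro ⟨m, hm⟩
      exact (Finset.mem_filter.mp hm).2 (hz m)
    rw [gA_succ, dif_neg hne, gA_zero]
  | succ k ih =>
    intro v hv
    by_cases hne : (Finset.univ.filter fun m => v m ≠ 0).Nonempty
    · have hL : v ((Finset.univ.filter fun m => v m ≠ 0).max' hne) ≠ 0 :=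
        (Finset.mem_filter.mp (Finset.max'_mem _ hne)).2
      have hlt := sum_dn2 d v _ hL
      rw [gA_succ d U (k+1), gA_succ d U k, dif_pos hne, dif_pos hne,
        ih _ (by omega)]
    · rw [gA_succ d U (k+1), gA_succ d U k, dif_neg hne, dif_neg hne]

lemma gA_eq (d : ℕ) (U : (Fin d → ℕ) → Matrix (Fin n) (Fin n) ℂ) :
    ∀ (k : ℕ) (v : Fin d → ℕ), (∑ m, v m) ≤ k → gA d U k v = gfun d U v := by
  intro k
  induction k with
  | zero => intro v hv; unfold gfun; rw [Nat.le_zero.mp hv]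
  | succ k ih =>
    intro v hv
    rcases Nat.lt_or_ge (∑ m, v m) (k+1) with h | h
    · rw [gA_succ_eq d U k v (by omega), ih v (by omega)]
    · have : (∑ m, v m) = k + 1 := by omega
      unfold gfun; rw [this]

lemma gfun_eq (d : ℕ) (U : (Fin d → ℕ) → Matrix (Fin n) (Fin n) ℂ) (v : Fin d → ℕ)
    (h : (Finset.univ.filter fun m => v m ≠ 0).Nonempty) :
    gfun d U v = gfun d U (dn2 d v ((Finset.univ.filter fun m => v m ≠ 0).max' h)) *
      U (fup d (dn2 d v ((Finset.univ.filter fun m => v m ≠ 0).max' h))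
          ((Finset.univ.filter fun m => v m ≠ 0).max' h)) := by
  set L := (Finset.univ.filter fun m => v m ≠ 0).max' h with hLdef
  have hL : v L ≠ 0 := (Finset.mem_filter.mp (Finset.max'_mem _ h)).2
  have h1 : v L ≤ ∑ m, v m := Finset.single_le_sum (fun i _ => Nat.zero_le _) (Finset.mem_univ L)
  obtain ⟨k, hk⟩ : ∃ k, (∑ m, v m) = k + 1 := ⟨(∑ m, v m) - 1, by omega⟩
  have hlt := sum_dn2 d v L hL
  show gA d U (∑ m, v m) v = _
  rw [hk, gA_succ, dif_pos h, ← hLdef, gA_eq d U k _ (by omega)]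


lemma up2_even (d : ℕ) (v : Fin d → ℕ) (l : Fin d) (hEv : ∀ m, Even (v m)) :
    ∀ m, Even (up2 d v l m) := by
  intro m
  rcases eq_or_ne m l with h | h
  · subst h; simp only [up2, Function.update_self]
    have := hEv m; rw [Nat.even_iff] at *; omega
  · simp only [up2, Function.update_apply, if_neg h]; exact hEv m

lemma up2_bound (d N : ℕ) (v : Fin d → ℕ) (l : Fin d) (hBd : ∀ m, v m ≤ 2 * N)
    (hl : v l + 2 ≤ 2 * N) : ∀ m, up2 d v l m ≤ 2 * N := by
  intro m
  rcases eq_or_ne m l with h | h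
  · subst h; simp only [up2, Function.update_self]; exact hl
  · simp only [up2, Function.update_apply, if_neg h]; exact hBd m

lemma up2_comm (d : ℕ) (a : Fin d → ℕ) (i j : Fin d) (hij : i ≠ j) :
    up2 d (up2 d a i) j = up2 d (up2 d a j) i := by
  funext m
  rcases eq_or_ne m i with h | h
  · subst h
    simp [up2, Function.update_apply, hij, Ne.symm hij]
  · rcases eq_or_ne m j with h2 | h2
    · subst h2
      simp [up2, Function.update_apply, hij, Ne.symm hij, h]
    · simp [up2, Function.update_apply, h, h2]

lemma oddSet_fup (d : ℕ) (v : Fin d → ℕ) (l : Fin d) (hEv : ∀ m, Even (v m)) :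
    oddSet d (fup d v l) = {l} := by
  ext m
  simp only [oddSet, Finset.mem_filter, Finset.mem_univ, true_and, Finset.mem_singleton,
    fup, Function.update_apply, Nat.odd_iff]
  have hm := hEv m; have hl2 := hEv l
  rw [Nat.even_iff] at hm hl2
  rcases eq_or_ne m l with h | h
  · subst h; simp; omega
  · simp [h]; omega

lemma card_oddSet_fup (d : ℕ) (v : Fin d → ℕ) (l : Fin d) (hEv : ∀ m, Even (v m)) :
    (oddSet d (fup d v l)).card = 1 := by
  rw [oddSet_fup d v l hEv, Finset.card_singleton]

lemma fup_bound (d N : ℕ) (v : Fin d → ℕ) (l : Fin d) (hBd : ∀ m, v m ≤ 2 * N)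
    (hl : v l + 2 ≤ 2 * N) : ∀ m, fup d v l m ≤ 2 * N := by
  intro m
  rcases eq_or_ne m l with h | h
  · subst h; simp only [fup, Function.update_self]; omega
  · simp only [fup, Function.update_apply, if_neg h]; exact hBd m

lemma lowerV_fup (d : ℕ) (v : Fin d → ℕ) (l : Fin d) (hEv : ∀ m, Even (v m)) :
    lowerV d (fup d v l) = v := by
  funext m
  simp only [lowerV, fup, Function.update_apply]
  rcases eq_or_ne m l with h | h
  · subst h
    rw [if_pos rfl, if_pos (Even.add_one (hEv m))]
    omega
  · rw [if_neg h]
    have hno : ¬ Odd (v m) := by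
      rw [Nat.odd_iff]; have := hEv m; rw [Nat.even_iff] at this; omega
    rw [if_neg hno]

lemma upperV_fup (d : ℕ) (v : Fin d → ℕ) (l : Fin d) (hEv : ∀ m, Even (v m)) :
    upperV d (fup d v l) = up2 d v l := by
  funext m
  simp only [upperV, fup, up2, Function.update_apply]
  rcases eq_or_ne m l with h | h
  · subst h
    rw [if_pos rfl, if_pos rfl, if_pos (Even.add_one (hEv m))]
  · rw [if_neg h, if_neg h]
    have hno : ¬ Odd (v m) := by
      rw [Nat.odd_iff]; have := hEv m; rw [Nat.even_iff] at this; omega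
    rw [if_neg hno]

lemma edgeAB_eq (d : ℕ) (a : Fin d → ℕ) (i j : Fin d) : edgeAB d a i j = fup d a i := by
  funext m
  rcases eq_or_ne m i with h | h <;> simp [edgeAB, fup, Function.update_apply, h]

lemma edgeAD_eq (d : ℕ) (a : Fin d → ℕ) (i j : Fin d) : edgeAD d a i j = fup d a j := by
  funext m
  rcases eq_or_ne m j with h | h <;> simp [edgeAD, fup, Function.update_apply, h]

lemma edgeBC_eq (d : ℕ) (a : Fin d → ℕ) (i j : Fin d) (hij : i ≠ j) :
    edgeBC d a i j = fup d (up2 d a i) j := by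
  funext m
  rcases eq_or_ne m i with h | h
  · subst h; simp [edgeBC, fup, up2, Function.update_apply, hij]
  · rcases eq_or_ne m j with h2 | h2
    · subst h2; simp [edgeBC, fup, up2, Function.update_apply, Ne.symm hij, h]
    · simp [edgeBC, fup, up2, Function.update_apply, h, h2]

lemma edgeDC_eq (d : ℕ) (a : Fin d → ℕ) (i j : Fin d) (hij : i ≠ j) :
    edgeDC d a i j = fup d (up2 d a j) i := by
  funext m
  rcases eq_or_ne m i with h | h
  · subst h; simp [edgeDC, fup, up2, Function.update_apply, hij]
  · rcases eq_or_ne m j with h2 | h2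
    · subst h2; simp [edgeDC, fup, up2, Function.update_apply, Ne.symm hij, h]
    · simp [edgeDC, fup, up2, Function.update_apply, h, h2]

lemma gfun_mem (d N : ℕ) (G : Set (Matrix (Fin n) (Fin n) ℂ))
    (hGone : (1 : Matrix (Fin n) (Fin n) ℂ) ∈ G)
    (hGmul : ∀ A ∈ G, ∀ B ∈ G, A * B ∈ G)
    (U : (Fin d → ℕ) → Matrix (Fin n) (Fin n) ℂ)
    (hU : ∀ e, (oddSet d e).card = 1 → (∀ m, e m ≤ 2 * N) → U e ∈ G) :
    ∀ (s : ℕ) (v : Fin d → ℕ), (∑ m, v m) = s → (∀ m, Even (v m)) →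
      (∀ m, v m ≤ 2 * N) → gfun d U v ∈ G := by
  intro s
  induction s using Nat.strong_induction_on with
  | _ s ih =>
    intro v hs hEv hBd
    by_cases hne : (Finset.univ.filter fun m => v m ≠ 0).Nonempty
    · set L := (Finset.univ.filter fun m => v m ≠ 0).max' hne with hLdef
      have key := gfun_eq d U v hne
      rw [← hLdef] at key
      have hvL : v L ≠ 0 := (Finset.mem_filter.mp (Finset.max'_mem _ hne)).2
      have hvL2 : 2 ≤ v L := by
        have := hEv L; rw [Nat.even_iff] at this; omega
      set u := dn2 d v L with hu
      have huL : u L = v L - 2 := by simp [hu, dn2]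
      have hum : ∀ m, m ≠ L → u m = v m := by
        intro m hm; simp [hu, dn2, Function.update_apply, hm]
      have hEvu : ∀ m, Even (u m) := by
        intro m
        rcases eq_or_ne m L with h | h
        · rw [h, huL]; have := hEv L; rw [Nat.even_iff] at this ⊢; omega
        · rw [hum m h]; exact hEv m
      have hBdu : ∀ m, u m ≤ 2 * N := by
        intro m
        rcases eq_or_ne m L with h | h
        · rw [h, huL]; have := hBd L; omega
        · rw [hum m h]; exact hBd m
      have hsum := sum_dn2_eq d v L hvL2
      rw [← hu] at hsum
      have hmemu := ih (∑ m, u m) (by omega) u rfl hEvu hBdu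
      have hedge : U (fup d u L) ∈ G := by
        apply hU _ (card_oddSet_fup d u L hEvu)
        apply fup_bound d N u L hBdu
        rw [huL]; have := hBd L; omega
      rw [key]
      exact hGmul _ hmemu _ hedge
    · have hz : ∀ m, v m = 0 := by
        intro m; by_contra h
        exact hne ⟨m, by simp only [Finset.mem_filter, Finset.mem_univ, true_and]; exact h⟩
      have h0 : (∑ m, v m) = 0 := Finset.sum_eq_zero (fun m _ => hz m)
      show gA d U (∑ m, v m) v ∈ G
      rw [h0, gA_zero]
      exact hGone

lemma cancel_mid (X B C : Matrix (Fin n) (Fin n) ℂ) (h : B * Bᴴ = 1) :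
    (X * B) * (Bᴴ * C) = X * C := by
  rw [mul_assoc, ← mul_assoc B, h, one_mul]

lemma step (d N : ℕ) (U : (Fin d → ℕ) → Matrix (Fin n) (Fin n) ℂ)
    (flat : ∀ (a : Fin d → ℕ) (i j : Fin d), i < j → (∀ m, Even (a m)) →
        (∀ m, a m ≤ 2 * N) → a i + 2 ≤ 2 * N → a j + 2 ≤ 2 * N →
        U (edgeAB d a i j) * U (edgeBC d a i j) = U (edgeAD d a i j) * U (edgeDC d a i j)) :
    ∀ (s : ℕ) (v : Fin d → ℕ), (∑ m, v m) = s → (∀ m, Even (v m)) → (∀ m, v m ≤ 2 * N) →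
      ∀ l : Fin d, v l + 2 ≤ 2 * N →
      gfun d U (up2 d v l) = gfun d U v * U (fup d v l) := by
  intro s
  induction s using Nat.strong_induction_on with
  | _ s ih =>
    intro v hs hEv hBd l hl
    have hwl : up2 d v l l = v l + 2 := by simp [up2]
    have hwm : ∀ m, m ≠ l → up2 d v l m = v m := by
      intro m hm; simp [up2, Function.update_apply, hm]
    have hne : (Finset.univ.filter fun m => up2 d v l m ≠ 0).Nonempty :=
      ⟨l, by simp only [Finset.mem_filter, Finset.mem_univ, true_and, hwl]; omega⟩
    set L := (Finset.univ.filter fun m => up2 d v l m ≠ 0).max' hne with hLdef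
    have key := gfun_eq d U (up2 d v l) hne
    rw [← hLdef] at key
    by_cases hLl : L = l
    · have hdn : dn2 d (up2 d v l) l = v := by
        funext m
        by_cases hm : m = l
        · subst hm; simp [dn2, up2]
        · simp [dn2, up2, Function.update_apply, hm]
      rw [hLl, hdn] at key
      exact key
    · -- L ≠ l
      have hlL : l < L := by
        have h1 : l ≤ L := Finset.le_max' _ l (by
          simp only [Finset.mem_filter, Finset.mem_univ, true_and, hwl]; omega)
        exact lt_of_le_of_ne h1 (fun h => hLl h.symm)
      have hvL : v L ≠ 0 := by
        have := (Finset.mem_filter.mp (Finset.max'_mem _ hne)).2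
        rwa [← hLdef, hwm L hLl] at this
      have hvL2 : 2 ≤ v L := by
        have := hEv L; rw [Nat.even_iff] at this; omega
      have hlL' : ¬ l = L := fun h => hLl h.symm
      have hdnw : dn2 d (up2 d v l) L = up2 d (dn2 d v L) l := by
        funext m
        by_cases hm : m = l
        · subst hm
          simp [dn2, up2, Function.update_apply, hLl, hlL']
        · by_cases hm2 : m = L
          · subst hm2
            simp [dn2, up2, Function.update_apply, hLl, hm]
          · simp [dn2, up2, Function.update_apply, hm, hm2]
      rw [hdnw] at key
      set u := dn2 d v L with hu
      have hul : u l = v l := by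
        simp [hu, dn2, Function.update_apply, hlL']
      have huL : u L = v L - 2 := by simp [hu, dn2]
      have hum : ∀ m, m ≠ L → u m = v m := by
        intro m hm; simp [hu, dn2, Function.update_apply, hm]
      have hEvu : ∀ m, Even (u m) := by
        intro m
        by_cases hm : m = L
        · subst hm; rw [huL]; have := hEv L; rw [Nat.even_iff] at *; omega
        · rw [hum m hm]; exact hEv m
      have hBdu : ∀ m, u m ≤ 2 * N := by
        intro m
        by_cases hm : m = L
        · subst hm; rw [huL]; have := hBd L; omega
        · rw [hum m hm]; exact hBd m
      have hsum := sum_dn2_eq d v L hvL2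
      have ihu := ih (s - 2) (by omega) u (by rw [← hu] at hsum; omega) hEvu hBdu l
        (by rw [hul]; exact hl)
      have hfl := flat u l L hlL hEvu hBdu (by rw [hul]; exact hl)
        (by rw [huL]; have := hBd L; omega)
      -- edge identifications
      have e1 : edgeAB d u l L = fup d u l := by
        funext m
        by_cases hm : m = l <;> simp [edgeAB, fup, Function.update_apply, hm]
      have e2 : edgeBC d u l L = fup d (up2 d u l) L := by
        funext m
        by_cases hm : m = l
        · subst hm
          simp [edgeBC, fup, up2, Function.update_apply, hlL']
        · by_cases hm2 : m = L
          · subst hm2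
            simp [edgeBC, fup, up2, Function.update_apply, hLl, hm]
          · simp [edgeBC, fup, up2, Function.update_apply, hm, hm2]
      have e3 : edgeAD d u l L = fup d u L := by
        funext m
        by_cases hm : m = L <;> simp [edgeAD, fup, Function.update_apply, hm]
      have e4 : edgeDC d u l L = fup d v l := by
        funext m
        by_cases hm : m = l
        · subst hm
          simp [edgeDC, fup, Function.update_apply, hul, hlL']
        · by_cases hm2 : m = L
          · subst hm2
            simp [edgeDC, fup, Function.update_apply, hLl, hm, huL]
            omega
          · simp [edgeDC, fup, Function.update_apply, hm, hm2, hum m hm2]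
      -- unfold gfun v
      have hnev : (Finset.univ.filter fun m => v m ≠ 0).Nonempty :=
        ⟨L, by simp only [Finset.mem_filter, Finset.mem_univ, true_and]; exact hvL⟩
      have hmaxv : (Finset.univ.filter fun m => v m ≠ 0).max' hnev = L := by
        apply le_antisymm
        · apply Finset.max'_le
          intro m hm
          have hvm : v m ≠ 0 := (Finset.mem_filter.mp hm).2
          apply Finset.le_max' _ m
          simp only [Finset.mem_filter, Finset.mem_univ, true_and]
          by_cases hml : m = l
          · subst hml; rw [hwl]; omega
          · rw [hwm m hml]; exact hvm
        · exact Finset.le_max' _ L (by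
            simp only [Finset.mem_filter, Finset.mem_univ, true_and]; exact hvL)
      have keyv := gfun_eq d U v hnev
      rw [hmaxv, ← hu] at keyv
      calc gfun d U (up2 d v l)
          = gfun d U (up2 d u l) * U (fup d (up2 d u l) L) := key
        _ = gfun d U u * U (fup d u l) * U (fup d (up2 d u l) L) := by rw [ihu]
        _ = gfun d U u * (U (edgeAB d u l L) * U (edgeBC d u l L)) := by
            rw [e1, e2, mul_assoc]
        _ = gfun d U u * (U (edgeAD d u l L) * U (edgeDC d u l L)) := by rw [hfl]
        _ = gfun d U u * U (fup d u L) * U (fup d v l) := by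
            rw [e3, e4, mul_assoc]
        _ = gfun d U v * U (fup d v l) := by rw [← keyv]


end FlatAux

/-- **Flatness criterion on the grid.**
Let `G` be a group of unitary `n×n` matrices and `U` a `G`-valued function on
the edges of the grid `I^d_N`.  Then `U` is a gauge transformation of the unit
field — i.e. `U(ab) = g(a)* g(b)` for some `G`-valued vertex function `g` — if
and only if its curvature vanishes on every 2-face, i.e. the two parallel
transports `U(ab)U(bc)` and `U(ad)U(dc)` from the minimal to the maximal vertex
of every 2-face agree. -/
theorem flatness_criterion (d N n : ℕ)
    (G : Set (Matrix (Fin n) (Fin n) ℂ))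
    (hGunit : ∀ A ∈ G, A ∈ Matrix.unitaryGroup (Fin n) ℂ)
    (hGone : (1 : Matrix (Fin n) (Fin n) ℂ) ∈ G)
    (hGstar : ∀ A ∈ G, Aᴴ ∈ G)
    (hGmul : ∀ A ∈ G, ∀ B ∈ G, A * B ∈ G)
    (U : (Fin d → ℕ) → Matrix (Fin n) (Fin n) ℂ)
    (hU : ∀ e, (oddSet d e).card = 1 → (∀ m, e m ≤ 2 * N) → U e ∈ G) :
    (∃ g : (Fin d → ℕ) → Matrix (Fin n) (Fin n) ℂ,
        (∀ v, (∀ m, Even (v m)) → (∀ m, v m ≤ 2 * N) → g v ∈ G) ∧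
        ∀ e, (oddSet d e).card = 1 → (∀ m, e m ≤ 2 * N) →
          U e = (g (lowerV d e))ᴴ * g (upperV d e))
    ↔ ∀ (a : Fin d → ℕ) (i j : Fin d), i < j → (∀ m, Even (a m)) →
        (∀ m, a m ≤ 2 * N) → a i + 2 ≤ 2 * N → a j + 2 ≤ 2 * N →
        U (edgeAB d a i j) * U (edgeBC d a i j)
          = U (edgeAD d a i j) * U (edgeDC d a i j) := by
  constructor
  · rintro ⟨g, hgG, hgU⟩ a i j hij hEv hBd hi hj
    have hij' : i ≠ j := ne_of_lt hij
    have hb_ev := FlatAux.up2_even d a i hEv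
    have hb_bd := FlatAux.up2_bound d N a i hBd hi
    have hd_ev := FlatAux.up2_even d a j hEv
    have hd_bd := FlatAux.up2_bound d N a j hBd hj
    have hbj : FlatAux.up2 d a i j + 2 ≤ 2 * N := by
      simp only [FlatAux.up2, Function.update_apply, if_neg (Ne.symm hij')]; exact hj
    have hdi : FlatAux.up2 d a j i + 2 ≤ 2 * N := by
      simp only [FlatAux.up2, Function.update_apply, if_neg hij']; exact hi
    rw [FlatAux.edgeAB_eq d a i j, FlatAux.edgeBC_eq d a i j hij',
      FlatAux.edgeAD_eq d a i j, FlatAux.edgeDC_eq d a i j hij']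
    rw [hgU _ (FlatAux.card_oddSet_fup d a i hEv) (FlatAux.fup_bound d N a i hBd hi),
      hgU _ (FlatAux.card_oddSet_fup d (FlatAux.up2 d a i) j hb_ev)
        (FlatAux.fup_bound d N _ j hb_bd hbj),
      hgU _ (FlatAux.card_oddSet_fup d a j hEv) (FlatAux.fup_bound d N a j hBd hj),
      hgU _ (FlatAux.card_oddSet_fup d (FlatAux.up2 d a j) i hd_ev)
        (FlatAux.fup_bound d N _ i hd_bd hdi)]
    rw [FlatAux.lowerV_fup d a i hEv, FlatAux.upperV_fup d a i hEv,
      FlatAux.lowerV_fup d _ j hb_ev, FlatAux.upperV_fup d _ j hb_ev,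
      FlatAux.lowerV_fup d a j hEv, FlatAux.upperV_fup d a j hEv,
      FlatAux.lowerV_fup d _ i hd_ev, FlatAux.upperV_fup d _ i hd_ev]
    have hB : g (FlatAux.up2 d a i) * (g (FlatAux.up2 d a i))ᴴ = 1 := by
      have := Matrix.mem_unitaryGroup_iff.mp (hGunit _ (hgG _ hb_ev hb_bd))
      rwa [Matrix.star_eq_conjTranspose] at this
    have hD : g (FlatAux.up2 d a j) * (g (FlatAux.up2 d a j))ᴴ = 1 := by
      have := Matrix.mem_unitaryGroup_iff.mp (hGunit _ (hgG _ hd_ev hd_bd))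
      rwa [Matrix.star_eq_conjTranspose] at this
    rw [FlatAux.cancel_mid _ _ _ hB, FlatAux.cancel_mid _ _ _ hD,
      FlatAux.up2_comm d a i j hij']
  · intro flat
    refine ⟨FlatAux.gfun d U, ?_, ?_⟩
    · intro v hv hb
      exact FlatAux.gfun_mem d N G hGone hGmul U hU (∑ m, v m) v rfl hv hb
    · intro e hcard hbd
      obtain ⟨l, hl⟩ := Finset.card_eq_one.mp hcard
      have hodd : Odd (e l) := by
        have hmem : l ∈ oddSet d e := hl ▸ Finset.mem_singleton_self l
        simpa [oddSet] using hmem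
      have hnot : ∀ m, m ≠ l → ¬ Odd (e m) := by
        intro m hm hob
        have : m ∈ oddSet d e := by
          simp only [oddSet, Finset.mem_filter, Finset.mem_univ, true_and]; exact hob
        rw [hl, Finset.mem_singleton] at this
        exact hm this
      obtain ⟨a, ha⟩ : ∃ a, a = lowerV d e := ⟨_, rfl⟩
      have hal : a l = e l - 1 := by simp [ha, lowerV, hodd]
      have ham : ∀ m, m ≠ l → a m = e m := by
        intro m hm; simp [ha, lowerV, hnot m hm]
      have hEva : ∀ m, Even (a m) := by
        intro m
        rcases eq_or_ne m l with h | h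
        · subst h; rw [hal]
          rw [Nat.odd_iff] at hodd; rw [Nat.even_iff]; omega
        · rw [ham m h]
          have := hnot m h; rw [Nat.odd_iff] at this; rw [Nat.even_iff]; omega
      have hBda : ∀ m, a m ≤ 2 * N := by
        intro m
        rcases eq_or_ne m l with h | h
        · subst h; rw [hal]; have := hbd m; omega
        · rw [ham m h]; exact hbd m
      have hal2 : a l + 2 ≤ 2 * N := by
        rw [hal]
        have h1 := hbd l
        rw [Nat.odd_iff] at hodd
        omega
      have he : e = fup d a l := by
        funext m
        rcases eq_or_ne m l with h | h
        · subst h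
          simp only [fup, Function.update_self, hal]
          rw [Nat.odd_iff] at hodd; omega
        · simp only [fup, Function.update_apply, if_neg h]
          exact (ham m h).symm
      have hstep := FlatAux.step d N U flat (∑ m, a m) a rfl hEva hBda l hal2
      have hupper : upperV d e = FlatAux.up2 d a l := by
        rw [he, FlatAux.upperV_fup d a l hEva]
      rw [← ha, hupper, hstep, he]
      have huni : (FlatAux.gfun d U a)ᴴ * FlatAux.gfun d U a = 1 := by
        have hmem := FlatAux.gfun_mem d N G hGone hGmul U hU (∑ m, a m) a rfl hEva hBda
        have := Matrix.mem_unitaryGroup_iff'.mp (hGunit _ hmem)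
        rwa [Matrix.star_eq_conjTranspose] at this
      rw [← mul_assoc, huni, one_mul]
end

section
/- Discrete fermion doubling: for the Dirac operator ∂̸ψ = γ⌢δψ + γ⌢*δψ on the doubled grid, one has the identity ∂̸∂̸ = ∂_initial # δ_initial, where the right-hand side is the d'Alembert operator of the initial grid. Consequently, if ψ satisfies the Dirac equation i∂̸ψ − 2mψ = 0 on the doubling of I^4_N, then on interior vertices of the initial grid I^4_N it satisfies the Klein–Gordon equation ∂#δψ + 4m²ψ = 0. -/
/-- The standard Dirac gamma matrices `γ⁰, γ¹, γ², γ³`. -/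
noncomputable def gammaM : Fin 4 → Matrix (Fin 4) (Fin 4) ℂ :=
  ![!![1, 0, 0, 0; 0, 1, 0, 0; 0, 0, -1, 0; 0, 0, 0, -1],
    !![0, 0, 0, 1; 0, 0, 1, 0; 0, -1, 0, 0; -1, 0, 0, 0],
    !![0, 0, 0, -Complex.I; 0, 0, Complex.I, 0; 0, Complex.I, 0, 0; -Complex.I, 0, 0, 0],
    !![0, 0, 1, 0; 0, 0, 0, -1; -1, 0, 0, 0; 0, 1, 0, 0]]

/-- Shift a vertex of the doubled grid by `a` steps in direction `k`. -/
def vadd (v : Fin 4 → ℕ) (k : Fin 4) (a : ℕ) : Fin 4 → ℕ :=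
  fun m => if m = k then v m + a else v m

/-- Shift a vertex of the doubled grid by `−a` steps in direction `k`. -/
def vsub (v : Fin 4 → ℕ) (k : Fin 4) (a : ℕ) : Fin 4 → ℕ :=
  fun m => if m = k then v m - a else v m

/-- The Dirac operator on the doubled grid:
`∂̸ψ = γ⌢δψ + γ⌢*δψ`, i.e. `[∂̸ψ](v) = Σ_k γ^k (ψ(v+e_k) − ψ(v−e_k))`,
where `e_k` are the unit steps of the doubling. -/
noncomputable def diracOp (ψ : (Fin 4 → ℕ) → Fin 4 → ℂ) :
    (Fin 4 → ℕ) → Fin 4 → ℂ :=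
  fun v => ∑ k : Fin 4, (gammaM k).mulVec (ψ (vadd v k 1) - ψ (vsub v k 1))

/-- The d'Alembert operator `∂ # δ` of the initial grid (whose steps are the
double steps `2e_k` of the doubling), with the Minkowski sign operator `#`
negating the components along the time direction:
`[∂#δψ](v) = Σ_k ε_k (ψ(v+2e_k) − 2ψ(v) + ψ(v−2e_k))`, `ε₀ = 1`, `ε₁=ε₂=ε₃=−1`. -/
noncomputable def dAlembert (ψ : (Fin 4 → ℕ) → Fin 4 → ℂ) :
    (Fin 4 → ℕ) → Fin 4 → ℂ :=
  fun v => ∑ k : Fin 4, (if k = 0 then (1 : ℂ) else -1)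
    • (ψ (vadd v k 2) - (2 : ℂ) • ψ v + ψ (vsub v k 2))

set_option maxHeartbeats 1000000 in
lemma gamma_sq (k : Fin 4) : gammaM k * gammaM k = (if k = 0 then (1:ℂ) else -1) • 1 := by
  fin_cases k <;>
  · ext i j
    fin_cases i <;> fin_cases j <;>
      simp [gammaM, Matrix.mul_apply, Fin.sum_univ_four, Matrix.one_apply,
        Matrix.vecHead, Matrix.vecTail, Complex.I_mul_I]

set_option maxHeartbeats 1000000 in
lemma pair01 : gammaM 0 * gammaM 1 + gammaM 1 * gammaM 0 = 0 := by
  ext i j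
  fin_cases i <;> fin_cases j <;>
    simp [gammaM, Matrix.mul_apply, Fin.sum_univ_four,
      Matrix.vecHead, Matrix.vecTail, Complex.I_mul_I]

set_option maxHeartbeats 1000000 in
lemma pair02 : gammaM 0 * gammaM 2 + gammaM 2 * gammaM 0 = 0 := by
  ext i j
  fin_cases i <;> fin_cases j <;>
    simp [gammaM, Matrix.mul_apply, Fin.sum_univ_four,
      Matrix.vecHead, Matrix.vecTail, Complex.I_mul_I]

set_option maxHeartbeats 1000000 in
lemma pair03 : gammaM 0 * gammaM 3 + gammaM 3 * gammaM 0 = 0 := by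
  ext i j
  fin_cases i <;> fin_cases j <;>
    simp [gammaM, Matrix.mul_apply, Fin.sum_univ_four,
      Matrix.vecHead, Matrix.vecTail, Complex.I_mul_I]

set_option maxHeartbeats 1000000 in
lemma pair12 : gammaM 1 * gammaM 2 + gammaM 2 * gammaM 1 = 0 := by
  ext i j
  fin_cases i <;> fin_cases j <;>
    simp [gammaM, Matrix.mul_apply, Fin.sum_univ_four,
      Matrix.vecHead, Matrix.vecTail, Complex.I_mul_I]

set_option maxHeartbeats 1000000 in
lemma pair13 : gammaM 1 * gammaM 3 + gammaM 3 * gammaM 1 = 0 := by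
  ext i j
  fin_cases i <;> fin_cases j <;>
    simp [gammaM, Matrix.mul_apply, Fin.sum_univ_four,
      Matrix.vecHead, Matrix.vecTail, Complex.I_mul_I]

set_option maxHeartbeats 1000000 in
lemma pair23 : gammaM 2 * gammaM 3 + gammaM 3 * gammaM 2 = 0 := by
  ext i j
  fin_cases i <;> fin_cases j <;>
    simp [gammaM, Matrix.mul_apply, Fin.sum_univ_four,
      Matrix.vecHead, Matrix.vecTail, Complex.I_mul_I]

set_option maxHeartbeats 1000000 in
lemma gamma_anticomm (k l : Fin 4) (h : k ≠ l) :
    gammaM k * gammaM l + gammaM l * gammaM k = 0 := by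
  have swap : ∀ a b : Fin 4, gammaM a * gammaM b + gammaM b * gammaM a = 0 →
      gammaM b * gammaM a + gammaM a * gammaM b = 0 := fun a b hab => by
    rw [add_comm]; exact hab
  fin_cases k <;> fin_cases l
  exacts [absurd rfl h, pair01, pair02, pair03,
    swap _ _ pair01, absurd rfl h, pair12, pair13,
    swap _ _ pair02, swap _ _ pair12, absurd rfl h, pair23,
    swap _ _ pair03, swap _ _ pair13, swap _ _ pair23, absurd rfl h]

lemma mulVec_sum (A : Matrix (Fin 4) (Fin 4) ℂ) (f : Fin 4 → Fin 4 → ℂ) :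
    A.mulVec (∑ l, f l) = ∑ l, A.mulVec (f l) :=
  map_sum A.mulVecLin f Finset.univ

lemma sum_antisymm (T : Fin 4 → Fin 4 → (Fin 4 → ℂ)) (h : ∀ k l, k ≠ l → T k l + T l k = 0) :
    ∑ k : Fin 4, ∑ l : Fin 4, T k l = ∑ k : Fin 4, T k k := by
  have h01 := h 0 1 (by decide)
  have h02 := h 0 2 (by decide)
  have h03 := h 0 3 (by decide)
  have h12 := h 1 2 (by decide)
  have h13 := h 1 3 (by decide)
  have h23 := h 2 3 (by decide)
  funext x
  have e01 := congrFun h01 x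
  have e02 := congrFun h02 x
  have e03 := congrFun h03 x
  have e12 := congrFun h12 x
  have e13 := congrFun h13 x
  have e23 := congrFun h23 x
  simp only [Finset.sum_apply, Fin.sum_univ_four, Pi.add_apply, Pi.zero_apply] at *
  linear_combination e01 + e02 + e03 + e12 + e13 + e23

/-- **Discrete fermion doubling.**
For the Dirac operator `∂̸ψ = γ⌢δψ + γ⌢*δψ` on the doubled grid one has the
identity `∂̸∂̸ = ∂#δ`, the d'Alembert operator of the initial grid (at interior
vertices).  Consequently, if `ψ` satisfies the Dirac equation
`i∂̸ψ − 2mψ = 0` at the nonboundary vertices of the doubling of `I⁴_N`, then at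
the interior vertices of the initial grid `I⁴_N` (even doubled coordinates,
away from the boundary) it satisfies the Klein–Gordon equation
`∂#δψ + 4m²ψ = 0` with twice larger mass. -/
theorem fermion_doubling (N : ℕ) (m : ℝ) (ψ : (Fin 4 → ℕ) → Fin 4 → ℂ) :
    (∀ v : Fin 4 → ℕ, (∀ i, 2 ≤ v i) →
        diracOp (diracOp ψ) v = dAlembert ψ v) ∧
    ((∀ v : Fin 4 → ℕ, (∀ i, 1 ≤ v i ∧ v i + 1 ≤ 2 * N) →
        Complex.I • diracOp ψ v - (2 * (m : ℂ)) • ψ v = 0) →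
      ∀ v : Fin 4 → ℕ, (∀ i, Even (v i) ∧ 2 ≤ v i ∧ v i + 2 ≤ 2 * N) →
        dAlembert ψ v + (4 * (m : ℂ) ^ 2) • ψ v = 0) := by
  have key : ∀ v : Fin 4 → ℕ, (∀ i, 2 ≤ v i) → diracOp (diracOp ψ) v = dAlembert ψ v := by
    intro v hv
    set F : Fin 4 → Fin 4 → (Fin 4 → ℂ) := fun k l =>
      ψ (vadd (vadd v k 1) l 1) - ψ (vsub (vadd v k 1) l 1)
      - ψ (vadd (vsub v k 1) l 1) + ψ (vsub (vsub v k 1) l 1) with hF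
    have Fsymm : ∀ k l, F k l = F l k := by
      intro k l
      have hp : vadd (vadd v k 1) l 1 = vadd (vadd v l 1) k 1 := by
        funext i; simp only [vadd]; split_ifs <;> omega
      have hq : vsub (vadd v k 1) l 1 = vadd (vsub v l 1) k 1 := by
        funext i; simp only [vadd, vsub]; have := hv i; split_ifs <;> omega
      have hr : vadd (vsub v k 1) l 1 = vsub (vadd v l 1) k 1 := by
        funext i; simp only [vadd, vsub]; have := hv i; split_ifs <;> omega
      have hs : vsub (vsub v k 1) l 1 = vsub (vsub v l 1) k 1 := by
        funext i; simp only [vsub]; split_ifs <;> omega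
      rw [hF]
      simp only
      rw [hp, hq, hr, hs]
      abel
    have expand : diracOp (diracOp ψ) v
        = ∑ k : Fin 4, ∑ l : Fin 4, (gammaM k * gammaM l).mulVec (F k l) := by
      show (∑ k : Fin 4, (gammaM k).mulVec
          (diracOp ψ (vadd v k 1) - diracOp ψ (vsub v k 1))) = _
      refine Finset.sum_congr rfl fun k _ => ?_
      show (gammaM k).mulVec
        ((∑ l : Fin 4, (gammaM l).mulVec
            (ψ (vadd (vadd v k 1) l 1) - ψ (vsub (vadd v k 1) l 1)))
         - ∑ l : Fin 4, (gammaM l).mulVec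
            (ψ (vadd (vsub v k 1) l 1) - ψ (vsub (vsub v k 1) l 1))) = _
      rw [← Finset.sum_sub_distrib, mulVec_sum]
      refine Finset.sum_congr rfl fun l _ => ?_
      rw [← Matrix.mulVec_sub, Matrix.mulVec_mulVec]
      congr 1
      rw [hF]
      simp only
      abel
    rw [expand, sum_antisymm _ (fun k l hkl => by
      rw [Fsymm k l, ← Matrix.add_mulVec, gamma_anticomm k l hkl, Matrix.zero_mulVec])]
    have diag : ∀ k : Fin 4, (gammaM k * gammaM k).mulVec (F k k)
        = (if k = 0 then (1:ℂ) else -1) • (ψ (vadd v k 2) - (2:ℂ) • ψ v + ψ (vsub v k 2)) := by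
      intro k
      have h1 : vadd (vadd v k 1) k 1 = vadd v k 2 := by
        funext i; simp only [vadd]; split_ifs <;> omega
      have h2 : vsub (vadd v k 1) k 1 = v := by
        funext i; simp only [vadd, vsub]; have := hv i; split_ifs <;> omega
      have h3 : vadd (vsub v k 1) k 1 = v := by
        funext i; simp only [vadd, vsub]; have := hv i; split_ifs <;> omega
      have h4 : vsub (vsub v k 1) k 1 = vsub v k 2 := by
        funext i; simp only [vsub]; split_ifs <;> omega
      rw [gamma_sq, Matrix.smul_mulVec, Matrix.one_mulVec, hF]
      simp only [h1, h2, h3, h4]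
      congr 1
      rw [two_smul]
      abel
    rw [Finset.sum_congr rfl fun k _ => diag k]
    rfl
  refine ⟨key, ?_⟩
  intro hD v hv
  have hv2 : ∀ i, 2 ≤ v i := fun i => (hv i).2.1
  have hc : ∀ w : Fin 4 → ℕ, (∀ i, 1 ≤ w i ∧ w i + 1 ≤ 2 * N) →
      diracOp ψ w = ((2 * (m : ℂ)) * (-Complex.I)) • ψ w := by
    intro w hw
    have h' : Complex.I • diracOp ψ w = (2 * (m : ℂ)) • ψ w := by
      have := hD w hw
      rwa [sub_eq_zero] at this
    calc diracOp ψ w = (-Complex.I) • (Complex.I • diracOp ψ w) := by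
          rw [smul_smul]; simp [Complex.I_mul_I]
      _ = (-Complex.I) • ((2 * (m : ℂ)) • ψ w) := by rw [h']
      _ = ((2 * (m : ℂ)) * (-Complex.I)) • ψ w := by rw [smul_smul, mul_comm]
  have hnb : ∀ k : Fin 4, (∀ i, 1 ≤ vadd v k 1 i ∧ vadd v k 1 i + 1 ≤ 2 * N)
      ∧ (∀ i, 1 ≤ vsub v k 1 i ∧ vsub v k 1 i + 1 ≤ 2 * N) := by
    intro k
    constructor <;> intro i <;>
      · have h1 := (hv i).2.1
        have h2 := (hv i).2.2
        simp only [vadd, vsub]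
        split_ifs <;> omega
  have hDD : diracOp (diracOp ψ) v = ((2 * (m : ℂ)) * (-Complex.I)) • diracOp ψ v := by
    show (∑ k : Fin 4, (gammaM k).mulVec
        (diracOp ψ (vadd v k 1) - diracOp ψ (vsub v k 1))) = _
    rw [diracOp, Finset.smul_sum]
    refine Finset.sum_congr rfl fun k _ => ?_
    rw [hc _ (hnb k).1, hc _ (hnb k).2, ← smul_sub, Matrix.mulVec_smul]
  have hval : dAlembert ψ v = (-(4 * (m : ℂ) ^ 2)) • ψ v := by
    have hb : ∀ i, 1 ≤ v i ∧ v i + 1 ≤ 2 * N := by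
      intro i
      have h1 := (hv i).2.1
      have h2 := (hv i).2.2
      omega
    rw [← key v hv2, hDD, hc v hb, smul_smul]
    congr 1
    have hI : Complex.I * Complex.I = -1 := Complex.I_mul_I
    ring_nf
    rw [Complex.I_sq]
    ring
  rw [hval, ← add_smul]
  simp
end
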